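/- arXiv:2303.00076 — 8 statements merged into one kernel-verified Lean document; each statement's English description precedes it below -/
import Mathlib

section
/- For all positive integers i and j, the inner product of 𝒞_i and 𝒮_j in L²([0,1]) vanishes: ⟨𝒞_i, 𝒮_j⟩ = 0. -/
open MeasureTheory

/-- The 1-periodic piecewise linear "cosine-like" function:
`𝒞(x) = 4|x - 1/2| - 1` on `[0,1]`, extended by `𝒞(x) = 𝒞(x - ⌊x⌋)`. -/
noncomputable def Cfun (x : ℝ) : ℝ := 4 * |Int.fract x - 1 / 2| - 1

/-- The 1-periodic piecewise linear "sine-like" function: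
`𝒮(x) = |2 - 4|x - 1/4|| - 1` on `[0,1]`, extended by `𝒮(x) = 𝒮(x - ⌊x⌋)`. -/
noncomputable def Sfun (x : ℝ) : ℝ := abs (2 - 4 * |Int.fract x - 1 / 4|) - 1

lemma Cfun_neg (y : ℝ) : Cfun (-y) = Cfun y := by
  unfold Cfun
  by_cases h : Int.fract y = 0
  · rw [Int.fract_neg_eq_zero.2 h, h]
  · rw [Int.fract_neg h]
    have := Int.fract_nonneg y
    have := Int.fract_lt_one y
    rcases abs_cases (Int.fract y - 1/2) with ⟨h1, h2⟩ | ⟨h1, h2⟩ <;>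
      rcases abs_cases (1 - Int.fract y - 1/2) with ⟨h3, h4⟩ | ⟨h3, h4⟩ <;> linarith

set_option maxHeartbeats 2000000 in
lemma Sfun_neg (y : ℝ) : Sfun (-y) = -Sfun y := by
  unfold Sfun
  by_cases h : Int.fract y = 0
  · rw [Int.fract_neg_eq_zero.2 h, h]
    have : |(0:ℝ) - 1/4| = 1/4 := by rw [abs_of_nonpos] <;> norm_num
    rw [this]; norm_num
  · rw [Int.fract_neg h]
    set f := Int.fract y with hf
    have h0 : 0 < f := lt_of_le_of_ne (Int.fract_nonneg y) (Ne.symm h)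
    have h1 : f < 1 := Int.fract_lt_one y
    rcases abs_cases (f - 1/4) with ⟨ha1, ha2⟩ | ⟨ha1, ha2⟩ <;>
      rcases abs_cases (1 - f - 1/4) with ⟨hb1, hb2⟩ | ⟨hb1, hb2⟩ <;>
      rw [ha1, hb1] <;>
      rcases abs_cases (2 - 4 * (f - 1/4)) with ⟨hc1, hc2⟩ | ⟨hc1, hc2⟩ <;>
      rcases abs_cases (2 - 4 * (1 - f - 1/4)) with ⟨hd1, hd2⟩ | ⟨hd1, hd2⟩ <;>
      rcases abs_cases (2 - 4 * -(f - 1/4)) with ⟨he1, he2⟩ | ⟨he1, he2⟩ <;>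
      rcases abs_cases (2 - 4 * -(1 - f - 1/4)) with ⟨hg1, hg2⟩ | ⟨hg1, hg2⟩ <;>
      simp only [hc1, hd1, he1, hg1] <;> linarith

lemma Cfun_add_int (y : ℝ) (n : ℤ) : Cfun (y + n) = Cfun y := by
  unfold Cfun; rw [Int.fract_add_intCast]

lemma Sfun_add_int (y : ℝ) (n : ℤ) : Sfun (y + n) = Sfun y := by
  unfold Sfun; rw [Int.fract_add_intCast]

/-- For all positive integers `i` and `j`, `⟨𝒞_i, 𝒮_j⟩ = 0` in `L²([0,1])`. -/
theorem inner_C_S_eq_zero (i j : ℕ) (hi : 0 < i) (hj : 0 < j) :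
    ∫ x in (0:ℝ)..1, Cfun (i * x) * Sfun (j * x) = 0 := by
  have key : ∀ x : ℝ, Cfun (i * (1 - x)) * Sfun (j * (1 - x))
      = -(Cfun (i * x) * Sfun (j * x)) := by
    intro x
    have hc : (i : ℝ) * (1 - x) = -(i * x) + (i : ℤ) := by push_cast; ring
    have hs : (j : ℝ) * (1 - x) = -(j * x) + (j : ℤ) := by push_cast; ring
    rw [hc, hs, Cfun_add_int, Sfun_add_int, Cfun_neg, Sfun_neg]
    ring
  have h1 : (∫ x in (0:ℝ)..1, Cfun (i * (1 - x)) * Sfun (j * (1 - x)))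
      = ∫ x in (0:ℝ)..1, Cfun (i * x) * Sfun (j * x) := by
    have := intervalIntegral.integral_comp_sub_left
      (a := (0:ℝ)) (b := 1) (fun x => Cfun (i * x) * Sfun (j * x)) 1
    simpa using this
  have h2 : (∫ x in (0:ℝ)..1, Cfun (i * (1 - x)) * Sfun (j * (1 - x)))
      = -∫ x in (0:ℝ)..1, Cfun (i * x) * Sfun (j * x) := by
    simp_rw [key]
    exact intervalIntegral.integral_neg
  linarith [h1.symm.trans h2]
end

section
/- Let i, j be positive integers such that exactly one of the two numbers i/gcd(i,j) and j/gcd(i,j) is even (equivalently, the prime factorizations of i and j contain different powers of 2). Then ⟨𝒞_i, 𝒞_j⟩ = 0 and ⟨𝒮_i, 𝒮_j⟩ = 0 in L²([0,1]). -/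
open MeasureTheory Filter Topology

lemma fract_add_half (x : ℝ) :
    Int.fract (x + 1/2) = Int.fract (Int.fract x + 1/2) := by
  have hx : x + 1/2 = (Int.fract x + 1/2) + (⌊x⌋ : ℝ) := by
    have := Int.floor_add_fract x; linarith
  rw [hx, Int.fract_add_intCast]

lemma Cfun_antiperiod (x : ℝ) : Cfun (x + 1/2) = -Cfun x := by
  have hy0 := Int.fract_nonneg x
  have hy1 := Int.fract_lt_one x
  unfold Cfun
  rw [fract_add_half]
  rcases lt_or_ge (Int.fract x) (1/2) with h | h
  · rw [Int.fract_eq_self.2 ⟨by linarith, by linarith⟩]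
    rw [abs_of_nonneg (show (0:ℝ) ≤ Int.fract x + 1/2 - 1/2 by linarith),
      abs_of_nonpos (show Int.fract x - 1/2 ≤ 0 by linarith)]
    ring
  · have h2 : Int.fract x + 1/2 = (Int.fract x - 1/2) + ((1:ℤ):ℝ) := by push_cast; ring
    rw [h2, Int.fract_add_intCast, Int.fract_eq_self.2 ⟨by linarith, by linarith⟩]
    rw [abs_of_nonpos (show Int.fract x - 1/2 - 1/2 ≤ 0 by linarith),
      abs_of_nonneg (show (0:ℝ) ≤ Int.fract x - 1/2 by linarith)]
    ring

lemma Sfun_antiperiod (x : ℝ) : Sfun (x + 1/2) = -Sfun x := by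
  have hy0 := Int.fract_nonneg x
  have hy1 := Int.fract_lt_one x
  unfold Sfun
  rw [fract_add_half]
  rcases lt_or_ge (Int.fract x) (1/2) with h | h
  · rw [Int.fract_eq_self.2 ⟨by linarith, by linarith⟩]
    rcases lt_or_ge (Int.fract x) (1/4) with h' | h'
    · rw [abs_of_nonneg (show (0:ℝ) ≤ Int.fract x + 1/2 - 1/4 by linarith),
        abs_of_nonpos (show Int.fract x - 1/4 ≤ 0 by linarith),
        abs_of_nonneg (show (0:ℝ) ≤ 2 - 4 * (Int.fract x + 1/2 - 1/4) by linarith),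
        abs_of_nonneg (show (0:ℝ) ≤ 2 - 4 * -(Int.fract x - 1/4) by linarith)]
      ring
    · rw [abs_of_nonneg (show (0:ℝ) ≤ Int.fract x + 1/2 - 1/4 by linarith),
        abs_of_nonneg (show (0:ℝ) ≤ Int.fract x - 1/4 by linarith),
        abs_of_nonpos (show 2 - 4 * (Int.fract x + 1/2 - 1/4) ≤ 0 by linarith),
        abs_of_nonneg (show (0:ℝ) ≤ 2 - 4 * (Int.fract x - 1/4) by linarith)]
      ring
  · have h2 : Int.fract x + 1/2 = (Int.fract x - 1/2) + ((1:ℤ):ℝ) := by push_cast; ring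
    rw [h2, Int.fract_add_intCast, Int.fract_eq_self.2 ⟨by linarith, by linarith⟩]
    rcases lt_or_ge (Int.fract x) (3/4) with h' | h'
    · rw [abs_of_nonpos (show Int.fract x - 1/2 - 1/4 ≤ 0 by linarith),
        abs_of_nonneg (show (0:ℝ) ≤ Int.fract x - 1/4 by linarith),
        abs_of_nonneg (show (0:ℝ) ≤ 2 - 4 * -(Int.fract x - 1/2 - 1/4) by linarith),
        abs_of_nonneg (show (0:ℝ) ≤ 2 - 4 * (Int.fract x - 1/4) by linarith)]
      ring
    · rw [abs_of_nonneg (show (0:ℝ) ≤ Int.fract x - 1/2 - 1/4 by linarith),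
        abs_of_nonneg (show (0:ℝ) ≤ Int.fract x - 1/4 by linarith),
        abs_of_nonneg (show (0:ℝ) ≤ 2 - 4 * (Int.fract x - 1/2 - 1/4) by linarith),
        abs_of_nonpos (show 2 - 4 * (Int.fract x - 1/4) ≤ 0 by linarith)]
      ring

lemma antiper_pow (g : ℝ → ℝ) (hg : ∀ x, g (x + 1/2) = -g x) :
    ∀ (n : ℕ) (x : ℝ), g (x + n/2) = (-1)^n * g x := by
  intro n
  induction n with
  | zero => intro x; simp
  | succ n ih =>
    intro x
    have h1 : x + ((n:ℕ)+1 : ℕ)/2 = (x + n/2) + 1/2 := by push_cast; ring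
    rw [h1, hg, ih, pow_succ]; ring

lemma integral_periodic_anti_zero (f : ℝ → ℝ) (hper : Function.Periodic f 1) (T : ℝ)
    (hanti : ∀ x, f (x + T) = -f x) : ∫ x in (0:ℝ)..1, f x = 0 := by
  have step1 := hper.intervalIntegral_add_eq 0 T
  simp only [zero_add] at step1
  have step2 : ∫ x in (0:ℝ)..1, f (x + T) = ∫ x in T..(T+1), f x := by
    rw [intervalIntegral.integral_comp_add_right f T, zero_add, add_comm]
  simp only [hanti, intervalIntegral.integral_neg] at step2
  linarith [step1.trans step2.symm]

lemma integral_antiper_zero (g : ℝ → ℝ) (hg : ∀ x, g (x + 1/2) = -g x)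
    (i j : ℕ) (hi : 0 < i) (hj : 0 < j)
    (h : (Even (i / Nat.gcd i j) ∧ Odd (j / Nat.gcd i j)) ∨
         (Odd (i / Nat.gcd i j) ∧ Even (j / Nat.gcd i j))) :
    ∫ x in (0:ℝ)..1, g (i * x) * g (j * x) = 0 := by
  have hd0 : 0 < Nat.gcd i j := Nat.gcd_pos_of_pos_left j hi
  set d := Nat.gcd i j with hd
  set a := i / d with ha
  set b := j / d with hb
  have hia : i = a * d := (Nat.div_mul_cancel (Nat.gcd_dvd_left i j)).symm
  have hjb : j = b * d := (Nat.div_mul_cancel (Nat.gcd_dvd_right i j)).symm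
  have hdr : (d : ℝ) ≠ 0 := Nat.cast_ne_zero.2 hd0.ne'
  have hir : (i : ℝ) = (a : ℝ) * (d : ℝ) := by exact_mod_cast hia
  have hjr : (j : ℝ) = (b : ℝ) * (d : ℝ) := by exact_mod_cast hjb
  have hab : Odd (a + b) := by
    rcases h with ⟨he, ho⟩ | ⟨ho, he⟩
    · exact he.add_odd ho
    · exact ho.add_even he
  have hper : Function.Periodic (fun x => g (i * x) * g (j * x)) 1 := by
    intro x
    have h1 : (i:ℝ) * (x + 1) = (i:ℝ) * x + ((2*i : ℕ) : ℝ)/2 := by push_cast; ring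
    have h2 : (j:ℝ) * (x + 1) = (j:ℝ) * x + ((2*j : ℕ) : ℝ)/2 := by push_cast; ring
    simp only [h1, h2, antiper_pow g hg]
    have e1 : ((-1:ℝ))^(2*i) = 1 := by rw [pow_mul]; norm_num
    have e2 : ((-1:ℝ))^(2*j) = 1 := by rw [pow_mul]; norm_num
    rw [e1, e2]; ring
  have hanti : ∀ x, g ((i:ℝ) * (x + 1/(2*(d:ℝ)))) * g ((j:ℝ) * (x + 1/(2*(d:ℝ))))
      = -(g ((i:ℝ) * x) * g ((j:ℝ) * x)) := by
    intro x
    have h1 : (i:ℝ) * (x + 1/(2*(d:ℝ))) = (i:ℝ) * x + (a:ℝ)/2 := by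
      rw [hir]; field_simp
    have h2 : (j:ℝ) * (x + 1/(2*(d:ℝ))) = (j:ℝ) * x + (b:ℝ)/2 := by
      rw [hjr]; field_simp
    rw [h1, h2, antiper_pow g hg a, antiper_pow g hg b]
    have e : (-1:ℝ)^a * (-1)^b = -1 := by
      rw [← pow_add]; exact hab.neg_one_pow
    linear_combination (g ((i:ℝ) * x) * g ((j:ℝ) * x)) * e
  exact integral_periodic_anti_zero _ hper (1/(2*(d:ℝ))) hanti

/-- If exactly one of `i/gcd(i,j)` and `j/gcd(i,j)` is even (i.e. the prime factorizations of
`i` and `j` contain different powers of 2), then `⟨𝒞_i, 𝒞_j⟩ = 0` and `⟨𝒮_i, 𝒮_j⟩ = 0`. -/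
theorem inner_CC_SS_eq_zero_of_diff_two_power (i j : ℕ) (hi : 0 < i) (hj : 0 < j)
    (h : (Even (i / Nat.gcd i j) ∧ Odd (j / Nat.gcd i j)) ∨
         (Odd (i / Nat.gcd i j) ∧ Even (j / Nat.gcd i j))) :
    (∫ x in (0:ℝ)..1, Cfun (i * x) * Cfun (j * x) = 0) ∧
    (∫ x in (0:ℝ)..1, Sfun (i * x) * Sfun (j * x) = 0) := by
  exact ⟨integral_antiper_zero Cfun Cfun_antiperiod i j hi hj h,
         integral_antiper_zero Sfun Sfun_antiperiod i j hi hj h⟩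
end

section
/- Let i, j be positive integers such that both i/gcd(i,j) and j/gcd(i,j) are odd. Then 3·⟨𝒞_i, 𝒞_j⟩ = gcd(i,j)⁴/(i²·j²). In particular, ⟨𝒞_i, 𝒞_i⟩ = 1/3 for every i ∈ ℕ. -/
/-! For odd `a` the function `𝒞` satisfies the distribution relation
`∑_{r < a} 𝒞((y + r) / a) = 𝒞(y) / a`, and for `b` coprime to `a` the shifts `b r` run over all
residues mod `a`. Substituting `u = a x` and folding `[0, a]` onto `[0, 1]` therefore gives
`⟨𝒞_a, 𝒞_b⟩ = a⁻² ⟨𝒞_1, 𝒞_b⟩`; applied twice this reduces everything to `⟨𝒞, 𝒞⟩ = 1/3`.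
The common factor `gcd(i, j)` drops out since `∫₀¹ F(g x) dx = ∫₀¹ F` for 1-periodic `F`. -/

open MeasureTheory Filter Topology

open Finset Function

theorem Function.Periodic.sum_range_comp_mul_left {M : Type*} [AddCommMonoid M] {f : ℕ → M}
    {a b : ℕ} (hf : Periodic f a) (hab : b.Coprime a) :
    ∑ r ∈ range a, f (b * r) = ∑ r ∈ range a, f r := by
  rcases Nat.eq_zero_or_pos a with rfl | ha
  · simp
  have hmaps : Set.MapsTo (fun r => b * r % a) (range a) (range a) := fun r _ =>
    mem_range.2 (Nat.mod_lt _ ha)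
  have hinj : Set.InjOn (fun r => b * r % a) (range a) := fun r hr s hs hrs =>
    Nat.ModEq.eq_of_lt_of_lt (Nat.ModEq.cancel_left_of_coprime (by simpa using hab.symm) hrs)
      (mem_range.1 hr) (mem_range.1 hs)
  calc ∑ r ∈ range a, f (b * r) = ∑ r ∈ range a, f (b * r % a) := by simp only [hf.map_mod_nat]
    _ = ∑ r ∈ range a, f r :=
      sum_nbij _ hmaps hinj (surjOn_of_injOn_of_card_le _ hmaps hinj le_rfl) fun _ _ => rfl

theorem Function.Periodic.map_fract {α : Type*} {f : ℝ → α} (hf : Periodic f 1) (x : ℝ) :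
    f (Int.fract x) = f x := by
  simpa [Int.fract_add_floor] using (hf.int_mul ⌊x⌋ (Int.fract x)).symm

theorem sum_range_abs_add_sub_of_abs_le (s : ℝ) (hs : |s| ≤ 1) (m : ℕ) :
    ∑ r ∈ range (2 * m + 1), |s + r - m| = |s| + m * (m + 1) := by
  induction m with
  | zero => simp
  | succ m ih =>
    obtain ⟨hs₁, hs₂⟩ := abs_le.1 hs
    rw [show 2 * (m + 1) + 1 = 2 * m + 1 + 1 + 1 by ring, sum_range_succ, sum_range_succ']
    push_cast
    have hshift : ∀ r : ℕ, |s + (r + 1 : ℝ) - (m + 1)| = |s + r - m| := fun r => by ring_nf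
    simp only [hshift, ih, add_zero]
    rw [abs_of_nonpos (by linarith : s - (m + 1) ≤ 0),
      abs_of_nonneg (by linarith : 0 ≤ s + (2 * m + 2) - (m + 1))]
    ring

open intervalIntegral in
theorem integral_comp_natCast_mul_eq_integral_sum {E : Type*} [NormedAddCommGroup E]
    [NormedSpace ℝ E] {F : ℝ → E} (hF : Continuous F) {n : ℕ} (hn : n ≠ 0) :
    ∫ x in (0 : ℝ)..1, F (n * x) = (n : ℝ)⁻¹ • ∫ u in (0 : ℝ)..1, ∑ r ∈ range n, F (u + r) := by
  have hn' : (n : ℝ) ≠ 0 := by exact_mod_cast hn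
  rw [integral_comp_mul_left F hn', mul_zero, mul_one,
    integral_finsetSum (f := fun (r : ℕ) u => F (u + r)) fun r _ =>
      (hF.comp (continuous_add_const _)).intervalIntegrable _ _]
  congr 1
  rw [← Nat.cast_zero (R := ℝ), ← sum_integral_adjacent_intervals (a := fun r : ℕ => (r : ℝ))
    fun r _ => hF.intervalIntegrable _ _]
  refine sum_congr rfl fun r _ => ?_
  rw [integral_comp_add_right]
  push_cast
  ring_nf

theorem Function.Periodic.integral_comp_natCast_mul {E : Type*} [NormedAddCommGroup E]
    [NormedSpace ℝ E] {F : ℝ → E} (hF : Continuous F) (hp : Periodic F 1) {n : ℕ} (hn : n ≠ 0) :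
    ∫ x in (0 : ℝ)..1, F (n * x) = ∫ x in (0 : ℝ)..1, F x := by
  have hn' : (n : ℝ) ≠ 0 := by exact_mod_cast hn
  have hshift (u : ℝ) (r : ℕ) : F (u + r) = F u := by simpa using hp.nat_mul r u
  simp_rw [integral_comp_natCast_mul_eq_integral_sum hF hn, hshift, sum_const, card_range,
    ← Nat.cast_smul_eq_nsmul ℝ, intervalIntegral.integral_smul, smul_smul, inv_mul_cancel₀ hn',
    one_smul]

theorem Cfun_periodic : Periodic Cfun 1 := fun x => by simp [Cfun]

theorem Cfun_add_natCast (x : ℝ) (n : ℕ) : Cfun (x + n) = Cfun x := by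
  simpa using Cfun_periodic.nat_mul n x

theorem Cfun_eq_of_mem_Icc {x : ℝ} (hx : x ∈ Set.Icc 0 1) : Cfun x = 4 * |x - 1 / 2| - 1 := by
  rcases hx.2.lt_or_eq with h | rfl
  · rw [Cfun, Int.fract_eq_self.2 ⟨hx.1, h⟩]
  · norm_num [Cfun, abs_of_pos]

@[fun_prop]
theorem continuous_Cfun : Continuous Cfun :=
  ContinuousOn.comp_fract'' (f := fun t : ℝ => 4 * |t - 1 / 2| - 1) (by fun_prop)
    (by norm_num [abs_of_pos])

theorem periodic_sum_range_Cfun_add_div {n : ℕ} (hn : n ≠ 0) :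
    Periodic (fun y : ℝ => ∑ r ∈ range n, Cfun ((y + r) / n)) 1 := fun y => by
  obtain ⟨k, rfl⟩ := Nat.exists_eq_add_one_of_ne_zero hn
  dsimp only
  rw [sum_range_succ, sum_range_succ']
  congr 1
  · exact sum_congr rfl fun r _ => by push_cast; ring_nf
  · convert Cfun_periodic ((y + ((0 : ℕ) : ℝ)) / ((k + 1 : ℕ) : ℝ)) using 2
    field_simp
    push_cast
    ring

theorem sum_range_Cfun_add_div_of_odd {a : ℕ} (ha : Odd a) (y : ℝ) :
    ∑ r ∈ range a, Cfun ((y + r) / a) = Cfun y / a := by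
  have hpos : (0 : ℝ) < a := by exact_mod_cast ha.pos
  obtain ⟨m, hm⟩ := ha
  have hcast : (a : ℝ) = 2 * m + 1 := by simp [hm]
  rw [← (periodic_sum_range_Cfun_add_div (by omega)).map_fract, ← Cfun_periodic.map_fract]
  have ht := Int.fract_nonneg y
  have ht' := Int.fract_lt_one y
  set t := Int.fract y
  have hterm : ∀ r ∈ range a, Cfun ((t + r) / a) = 4 / a * |(t - 1 / 2) + r - m| - 1 := by
    intro r hr
    have hr : (r : ℝ) + 1 ≤ a := by exact_mod_cast mem_range.1 hr
    rw [Cfun_eq_of_mem_Icc ⟨by positivity, by rw [div_le_one hpos]; linarith⟩,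
      show (t + r) / a - 1 / 2 = ((t - 1 / 2) + r - m) / a by rw [hcast]; field_simp; ring,
      abs_div, abs_of_pos hpos]
    ring
  have habs : |t - 1 / 2| ≤ 1 := abs_le.2 ⟨by linarith, by linarith⟩
  rw [sum_congr rfl hterm, sum_sub_distrib, ← mul_sum, hm, sum_range_abs_add_sub_of_abs_le _ habs,
    Cfun_eq_of_mem_Icc ⟨ht, ht'.le⟩, sum_const, card_range, nsmul_eq_mul, ← hm, hcast]
  -- oddness enters here: `(2m + 1)² = 4 m (m + 1) + 1` cancels the constant terms
  field_simp
  ring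

theorem sum_range_Cfun_add_mul_div_of_coprime {a b : ℕ} (ha : Odd a) (hab : b.Coprime a)
    (y : ℝ) : ∑ r ∈ range a, Cfun ((y + b * r) / a) = Cfun y / a := by
  have hper : Periodic (fun n : ℕ => Cfun ((y + n) / a)) a := fun n => by
    have ha : (a : ℝ) ≠ 0 := by exact_mod_cast ha.pos.ne'
    dsimp only
    rw [← Cfun_periodic ((y + n) / a)]
    push_cast
    congr 1
    field_simp
    ring
  rw [← sum_range_Cfun_add_div_of_odd ha, ← hper.sum_range_comp_mul_left hab]
  push_cast
  rfl

theorem integral_Cfun_mul_Cfun_eq_inv_sq_mul_of_odd {a b : ℕ} (ha : Odd a) (hab : b.Coprime a) :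
    ∫ x in (0 : ℝ)..1, Cfun (a * x) * Cfun (b * x)
      = ((a : ℝ) ^ 2)⁻¹ * ∫ x in (0 : ℝ)..1, Cfun x * Cfun (b * x) := by
  have ha' : (a : ℝ) ≠ 0 := by exact_mod_cast ha.pos.ne'
  have hsum (u : ℝ) : ∑ r ∈ range a, Cfun (u + r) * Cfun (b * (u + r) / a)
      = Cfun u * Cfun (b * u) / a := by
    have hterm (r : ℕ) :
        Cfun (u + r) * Cfun (b * (u + r) / a) = Cfun u * Cfun ((b * u + b * r) / a) := by
      rw [mul_add, Cfun_add_natCast]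
    rw [sum_congr rfl fun r _ => hterm r, ← mul_sum, sum_range_Cfun_add_mul_div_of_coprime ha hab,
      mul_div_assoc]
  calc ∫ x in (0 : ℝ)..1, Cfun (a * x) * Cfun (b * x)
      = ∫ x in (0 : ℝ)..1, (fun u => Cfun u * Cfun (b * u / a)) (a * x) := by
        refine intervalIntegral.integral_congr fun x _ => ?_
        dsimp only
        rw [mul_left_comm, mul_div_cancel_left₀ _ ha']
    _ = (a : ℝ)⁻¹ * ∫ u in (0 : ℝ)..1, Cfun u * Cfun (b * u) / a := by
        rw [integral_comp_natCast_mul_eq_integral_sum (F := fun u => Cfun u * Cfun (b * u / a))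
          (by fun_prop) ha.pos.ne', smul_eq_mul]
        simp only [hsum]
    _ = ((a : ℝ) ^ 2)⁻¹ * ∫ x in (0 : ℝ)..1, Cfun x * Cfun (b * x) := by
        rw [intervalIntegral.integral_div]
        field_simp

open intervalIntegral in
theorem integral_Cfun_mul_self : ∫ x in (0 : ℝ)..1, Cfun x * Cfun x = 1 / 3 := by
  have hint (c d : ℝ) : IntervalIntegrable (fun x => Cfun x * Cfun x) volume c d :=
    (by fun_prop : Continuous fun x => Cfun x * Cfun x).intervalIntegrable c d
  have hleft :
      ∫ x in (0 : ℝ)..1 / 2, Cfun x * Cfun x = ∫ x in (0 : ℝ)..1 / 2, (1 - 4 * x) ^ 2 := by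
    refine integral_congr fun x hx => ?_
    rw [Set.uIcc_of_le (by norm_num)] at hx
    rw [Cfun_eq_of_mem_Icc ⟨hx.1, by linarith [hx.2]⟩, abs_of_nonpos (by linarith [hx.2])]
    ring
  have hright :
      ∫ x in (1 / 2 : ℝ)..1, Cfun x * Cfun x = ∫ x in (1 / 2 : ℝ)..1, (4 * x - 3) ^ 2 := by
    refine integral_congr fun x hx => ?_
    rw [Set.uIcc_of_le (by norm_num)] at hx
    rw [Cfun_eq_of_mem_Icc ⟨by linarith [hx.1], hx.2⟩, abs_of_nonneg (by linarith [hx.1])]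
    ring
  rw [← integral_add_adjacent_intervals (hint 0 (1 / 2)) (hint _ _), hleft, hright,
    integral_comp_sub_mul (fun x => x ^ 2) four_ne_zero,
    integral_comp_mul_sub (fun x => x ^ 2) four_ne_zero]
  norm_num [integral_pow]

theorem periodic_Cfun_natCast_mul (n : ℕ) : Periodic (fun x => Cfun (n * x)) 1 := fun x => by
  simp only [mul_add, mul_one, Cfun_add_natCast]

theorem integral_Cfun_mul_Cfun_of_coprime {a b : ℕ} (ha : Odd a) (hb : Odd b)
    (hab : a.Coprime b) :
    ∫ x in (0 : ℝ)..1, Cfun (a * x) * Cfun (b * x) = 1 / (3 * a ^ 2 * b ^ 2) := by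
  have hswap : ∫ x in (0 : ℝ)..1, Cfun x * Cfun (b * x)
      = ∫ x in (0 : ℝ)..1, Cfun (b * x) * Cfun ((1 : ℕ) * x) := by
    refine intervalIntegral.integral_congr fun x _ => ?_
    rw [Nat.cast_one, one_mul, mul_comm]
  rw [integral_Cfun_mul_Cfun_eq_inv_sq_mul_of_odd ha hab.symm, hswap,
    integral_Cfun_mul_Cfun_eq_inv_sq_mul_of_odd hb (Nat.coprime_one_left b)]
  simp only [Nat.cast_one, one_mul, integral_Cfun_mul_self]
  field_simp

theorem integral_Cfun_mul_Cfun_cancel_natCast_mul {g : ℕ} (hg : g ≠ 0) (a b : ℕ) :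
    ∫ x in (0 : ℝ)..1, Cfun (g * a * x) * Cfun (g * b * x)
      = ∫ x in (0 : ℝ)..1, Cfun (a * x) * Cfun (b * x) := by
  refine Eq.trans ?_ <| ((periodic_Cfun_natCast_mul a).mul
    (periodic_Cfun_natCast_mul b)).integral_comp_natCast_mul (by fun_prop) hg
  refine intervalIntegral.integral_congr fun x _ => ?_
  simp only [Pi.mul_apply]
  ring_nf

theorem inner_CC_of_odd_ratio_general (i j : ℕ)
    (h1 : Odd (i / Nat.gcd i j)) (h2 : Odd (j / Nat.gcd i j)) :
    (3 * ∫ x in (0:ℝ)..1, Cfun (i * x) * Cfun (j * x)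
        = (Nat.gcd i j : ℝ) ^ 4 / ((i : ℝ) ^ 2 * (j : ℝ) ^ 2)) ∧
    (∀ n : ℕ, 0 < n → ∫ x in (0:ℝ)..1, Cfun (n * x) * Cfun (n * x) = 1 / 3) := by
  refine ⟨?_, fun n hn => ?_⟩
  · obtain ⟨g, a, b, hg, ha, hb, hab, rfl, rfl⟩ : ∃ g a b : ℕ,
        g ≠ 0 ∧ Odd a ∧ Odd b ∧ a.Coprime b ∧ i = g * a ∧ j = g * b := by
      have hg : Nat.gcd i j ≠ 0 := fun hg => by simp [hg] at h1
      exact ⟨_, _, _, hg, h1, h2, Nat.coprime_div_gcd_div_gcd (Nat.pos_of_ne_zero hg),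
        (Nat.mul_div_cancel' (Nat.gcd_dvd_left i j)).symm,
        (Nat.mul_div_cancel' (Nat.gcd_dvd_right i j)).symm⟩
    rw [Nat.gcd_mul_left, hab.gcd_eq_one, mul_one]
    push_cast
    rw [integral_Cfun_mul_Cfun_cancel_natCast_mul hg, integral_Cfun_mul_Cfun_of_coprime ha hb hab]
    have hg' : (g : ℝ) ≠ 0 := by exact_mod_cast hg
    have ha' : (a : ℝ) ≠ 0 := by exact_mod_cast ha.pos.ne'
    have hb' : (b : ℝ) ≠ 0 := by exact_mod_cast hb.pos.ne'
    field_simp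
  · exact ((Cfun_periodic.mul Cfun_periodic).integral_comp_natCast_mul (by fun_prop)
      hn.ne').trans integral_Cfun_mul_self

/-- If both `i/gcd(i,j)` and `j/gcd(i,j)` are odd, then
`3⟨𝒞_i, 𝒞_j⟩ = gcd(i,j)⁴/(i²j²)`; in particular `⟨𝒞_i, 𝒞_i⟩ = 1/3` for every `i ∈ ℕ`. -/
theorem inner_CC_of_odd_ratio (i j : ℕ) (hi : 0 < i) (hj : 0 < j)
    (h1 : Odd (i / Nat.gcd i j)) (h2 : Odd (j / Nat.gcd i j)) :
    (3 * ∫ x in (0:ℝ)..1, Cfun (i * x) * Cfun (j * x)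
        = (Nat.gcd i j : ℝ) ^ 4 / ((i : ℝ) ^ 2 * (j : ℝ) ^ 2)) ∧
    (∀ n : ℕ, 0 < n → ∫ x in (0:ℝ)..1, Cfun (n * x) * Cfun (n * x) = 1 / 3) :=
  inner_CC_of_odd_ratio_general i j h1 h2
end

section
/- For every positive integer i, the series of off-diagonal Gram entries satisfies Σ_{j∈ℕ, j≠i} 3·⟨𝒞_i, 𝒞_j⟩ ≤ 1/2 (all terms are nonnegative and the series converges); equivalently, Σ_{j=1}^∞ 3·⟨𝒞_i, 𝒞_j⟩ ≤ 3/2. The same bound holds with absolute values for the 𝒮-functions: Σ_{j∈ℕ, j≠i} 3·|⟨𝒮_i, 𝒮_j⟩| ≤ 1/2. -/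
/-!
The triangle wave has the Fourier expansion `𝒞(x) = ∑ₖ aₖ cos(2π(2k+1)x)` with
`aₖ = 8 / (π²(2k+1)²)`: it is the odd-frequency part of the Fourier series of the periodic
Bernoulli function `B₂`. Evaluating at `0` gives `∑ aₖ = 1`, and `ζ(4)` gives `∑ aₖ² = 2/3`.
By orthogonality, `⟨𝒞_i, 𝒞_j⟩ = ½ ∑ aₖ aₗ` over the pairs `(k, l)` with `(2k+1)i = (2l+1)j`.
A pair `(k, l)` is counted for at most one `j`, so a whole row sums to at most
`½ (∑ aₖ)² = ½`, while the diagonal entry is `½ ∑ aₖ² = 1/3`. Since `𝒮(x) = 𝒞(x - 1/4)`,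
the expansion of `⟨𝒮_i, 𝒮_j⟩` has the same terms multiplied by cosines of phases, hence
`|⟨𝒮_i, 𝒮_j⟩| ≤ ⟨𝒞_i, 𝒞_j⟩`, with equality on the diagonal.
-/

open MeasureTheory Filter Topology

open Real

theorem Finset.sum_ite_le_of_subsingleton {α R : Type*} [Semiring R] [PartialOrder R]
    [IsOrderedRing R] {s : Finset α} {P : α → Prop} [DecidablePred P]
    (hP : ∀ a b, P a → P b → a = b) {D : R} (hD : 0 ≤ D) :
    ∑ a ∈ s, (if P a then D else 0) ≤ D := by
  rw [Finset.sum_ite, Finset.sum_const_zero, add_zero, Finset.sum_const, nsmul_eq_mul]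
  have h_card : (s.filter P).card ≤ 1 := Finset.card_le_one.mpr fun a ha b hb =>
    hP a b (Finset.mem_filter.mp ha).2 (Finset.mem_filter.mp hb).2
  exact mul_le_of_le_one_left hD (Nat.cast_one (R := R) ▸ Nat.mono_cast h_card)

theorem sum_le_of_hasSum_mul {ι κ : Type*} {w : ι → ℝ} {W D : ℝ} (hw0 : ∀ p, 0 ≤ w p)
    (hw : HasSum w W) {c : κ → ι → ℝ} {I : κ → ℝ} {s : Finset κ}
    (hI : ∀ j ∈ s, HasSum (fun p => w p * c j p) (I j)) (hD : ∀ p, ∑ j ∈ s, c j p ≤ D) :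
    ∑ j ∈ s, I j ≤ W * D :=
  hasSum_le (fun p => by rw [← Finset.mul_sum]; exact mul_le_mul_of_nonneg_left (hD p) (hw0 p))
    (hasSum_sum hI) (hw.mul_right D)

theorem tsum_subtype_eq_tsum_sub {β : Type*} {f : β → ℝ} (hf : Summable f) {P : β → Prop}
    {b : β} (hP : ∀ x, ¬P x ↔ x = b) : ∑' x : {x // P x}, f x = ∑' x, f x - f b := by
  have h_compl : {x | P x}ᶜ = {b} := Set.ext fun x => hP x
  have h_split := hf.tsum_subtype_add_tsum_subtype_compl {x | P x}
  rw [h_compl, tsum_singleton] at h_split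
  exact eq_sub_of_add_eq h_split

theorem HasSum.odd_of_even {α : Type*} [AddCommGroup α] [TopologicalSpace α]
    [IsTopologicalAddGroup α] {f : ℕ → α} {s e : α} (hf : HasSum f s)
    (he : HasSum (fun k => f (2 * k)) e) : HasSum (fun k => f (2 * k + 1)) (s - e) := by
  have h_even : HasSum (fun n => if Even n then f n else 0) e := by
    refine ((mul_right_injective₀ two_ne_zero).hasSum_iff fun n hn => ?_).mp ?_
    · rw [if_neg]
      rintro ⟨k, rfl⟩
      exact hn ⟨k, two_mul k⟩
    · simpa [Function.comp_def] using he
  have h_inj : Function.Injective (2 * · + 1) := fun a b h => by simpa using h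
  have h_odd := (h_inj.hasSum_iff (f := fun n => f n - if Even n then f n else 0)
    fun n hn => ?_).mpr (hf.sub h_even)
  · simpa [Function.comp_def] using h_odd
  · rw [if_pos (Nat.not_odd_iff_even.mp fun ⟨k, hk⟩ => hn ⟨k, hk.symm⟩), sub_self]

theorem hasSum_cos_div_sq (x : ℝ) :
    HasSum (fun n : ℕ => cos (2 * π * n * x) / n ^ 2) (π ^ 2 * bernoulliFun 2 (Int.fract x)) := by
  have h := hasSum_one_div_nat_pow_mul_cos one_ne_zero ⟨Int.fract_nonneg x, (Int.fract_lt_one x).le⟩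
  convert h using 1
  · ext n
    rw [Int.fract, mul_sub, show 2 * π * n * ⌊x⌋ = ((n * ⌊x⌋ : ℤ) : ℝ) * (2 * π) by push_cast; ring,
      cos_sub_int_mul_two_pi]
    ring
  · change _ = _ * bernoulliFun (2 * 1) (Int.fract x)
    simp only [Nat.reduceMul, Nat.factorial, Nat.reduceAdd]
    push_cast
    ring

theorem integral_cos_two_pi_int_mul_add (N : ℤ) (hN : N ≠ 0) (c : ℝ) :
    ∫ x in (0:ℝ)..1, cos (2 * π * N * x + c) = 0 := by
  have h2πN : 2 * π * N ≠ 0 := by positivity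
  rw [intervalIntegral.integral_comp_mul_add cos h2πN, integral_cos,
    show 2 * π * N * 1 + c = c + N * (2 * π) by ring, show 2 * π * N * 0 + c = c by ring,
    sin_add_int_mul_two_pi, sub_self, smul_zero]

theorem integral_cos_mul_cos (A B : ℕ) (hA : 0 < A) (p q : ℝ) :
    ∫ x in (0:ℝ)..1, cos (2 * π * A * x + p) * cos (2 * π * B * x + q)
      = if A = B then cos (p - q) / 2 else 0 := by
  have h_prod : ∀ x : ℝ, cos (2 * π * A * x + p) * cos (2 * π * B * x + q)
      = cos (2 * π * ((A - B : ℤ) : ℝ) * x + (p - q)) / 2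
        + cos (2 * π * ((A + B : ℤ) : ℝ) * x + (p + q)) / 2 := fun x => by
    have h_sub : 2 * π * ((A - B : ℤ) : ℝ) * x + (p - q)
        = (2 * π * A * x + p) - (2 * π * B * x + q) := by push_cast; ring
    have h_add : 2 * π * ((A + B : ℤ) : ℝ) * x + (p + q)
        = (2 * π * A * x + p) + (2 * π * B * x + q) := by push_cast; ring
    rw [h_sub, h_add, cos_sub (2 * π * A * x + p), cos_add (2 * π * A * x + p)]
    ring
  simp_rw [h_prod]
  rw [intervalIntegral.integral_add (Continuous.intervalIntegrable (by fun_prop) _ _)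
      (Continuous.intervalIntegrable (by fun_prop) _ _),
    intervalIntegral.integral_div, intervalIntegral.integral_div,
    integral_cos_two_pi_int_mul_add (A + B) (by omega), zero_div, add_zero]
  split_ifs with hAB
  · simp [hAB]
  · rw [integral_cos_two_pi_int_mul_add _ (by omega), zero_div]

theorem hasSum_integral_mul_of_hasSum_cos {ι κ : Type*} [Countable ι] [Countable κ]
    {a : ι → ℝ} {b : κ → ℝ} (ha : Summable a) (hb : Summable b) {M : ι → ℕ} {N : κ → ℕ}
    (hM : ∀ k, 0 < M k) {p : ι → ℝ} {q : κ → ℝ} {f g : ℝ → ℝ}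
    (hf : ∀ x, HasSum (fun k => a k * cos (2 * π * M k * x + p k)) (f x))
    (hg : ∀ x, HasSum (fun l => b l * cos (2 * π * N l * x + q l)) (g x)) :
    HasSum (fun kl : ι × κ => a kl.1 * b kl.2 *
      if M kl.1 = N kl.2 then cos (p kl.1 - q kl.2) / 2 else 0) (∫ x in (0:ℝ)..1, f x * g x) := by
  have h_bound : Summable fun kl : ι × κ => |a kl.1| * |b kl.2| :=
    summable_mul_of_summable_norm (f := fun k => |a k|) (g := fun l => |b l|)
      (by simpa using ha.abs) (by simpa using hb.abs)
  have h_term : ∀ (kl : ι × κ) x, ‖a kl.1 * cos (2 * π * M kl.1 * x + p kl.1) *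
      (b kl.2 * cos (2 * π * N kl.2 * x + q kl.2))‖ ≤ |a kl.1| * |b kl.2| := fun kl x => by
    simp only [norm_mul, norm_eq_abs]
    calc _ = |a kl.1| * |b kl.2| * (|cos (2 * π * M kl.1 * x + p kl.1)|
          * |cos (2 * π * N kl.2 * x + q kl.2)|) := by ring
      _ ≤ |a kl.1| * |b kl.2| * 1 := by
          gcongr
          exact mul_le_one₀ (abs_cos_le_one _) (abs_nonneg _) (abs_cos_le_one _)
      _ = _ := mul_one _
  have h_sum := intervalIntegral.hasSum_integral_of_dominated_convergence
    (F := fun (kl : ι × κ) x => a kl.1 * cos (2 * π * M kl.1 * x + p kl.1) *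
      (b kl.2 * cos (2 * π * N kl.2 * x + q kl.2)))
    (μ := volume) (a := 0) (b := 1) (fun kl _ => |a kl.1| * |b kl.2|)
    (fun kl => Continuous.aestronglyMeasurable (by fun_prop))
    (fun kl => ae_of_all _ fun x _ => h_term kl x)
    (ae_of_all _ fun _ _ => h_bound) intervalIntegrable_const
    (ae_of_all _ fun x _ => (hf x).mul (hg x) (.of_norm_bounded h_bound (h_term · x)))
  refine h_sum.congr_fun fun kl => ?_
  rw [← integral_cos_mul_cos _ _ (hM kl.1), ← intervalIntegral.integral_const_mul]
  congr 1 with x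
  ring

noncomputable def cfunCoeff (k : ℕ) : ℝ := 8 / (π ^ 2 * (2 * k + 1) ^ 2)

theorem cfunCoeff_nonneg (k : ℕ) : 0 ≤ cfunCoeff k := by unfold cfunCoeff; positivity

theorem Cfun_eq_bernoulliFun (x : ℝ) :
    Cfun x = 8 * (bernoulliFun 2 (Int.fract x) - bernoulliFun 2 (Int.fract (2 * x)) / 4) := by
  have h0 := Int.fract_nonneg x
  have h1 := Int.fract_lt_one x
  have h2x : 2 * x - 2 * Int.fract x = ((2 * ⌊x⌋ : ℤ) : ℝ) := by push_cast; rw [Int.fract]; ring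
  rw [Cfun, bernoulliFun_two, bernoulliFun_two]
  rcases lt_or_ge (Int.fract x) (1 / 2) with h | h
  · rw [Int.fract_eq_iff.mpr ⟨by linarith, by linarith, _, h2x⟩, abs_of_neg (by linarith)]
    ring
  · have h2x' : 2 * x - (2 * Int.fract x - 1) = ((2 * ⌊x⌋ + 1 : ℤ) : ℝ) := by
      push_cast at h2x ⊢; linarith
    rw [Int.fract_eq_iff.mpr ⟨by linarith, by linarith, _, h2x'⟩, abs_of_nonneg (by linarith)]
    ring

theorem hasSum_cfunCoeff_mul_cos (x : ℝ) :
    HasSum (fun k : ℕ => cfunCoeff k * cos (2 * π * (2 * k + 1) * x)) (Cfun x) := by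
  have h_even : HasSum (fun k : ℕ => cos (2 * π * (2 * k : ℕ) * x) / (2 * k : ℕ) ^ 2)
      (π ^ 2 * bernoulliFun 2 (Int.fract (2 * x)) / 4) :=
    ((hasSum_cos_div_sq (2 * x)).div_const 4).congr_fun fun k => by
      rw [show 2 * π * (2 * k : ℕ) * x = 2 * π * k * (2 * x) by push_cast; ring]
      push_cast
      ring
  have h_odd := ((hasSum_cos_div_sq x).odd_of_even h_even).mul_left (8 / π ^ 2)
  rw [show Cfun x = 8 / π ^ 2 * (π ^ 2 * bernoulliFun 2 (Int.fract x)
      - π ^ 2 * bernoulliFun 2 (Int.fract (2 * x)) / 4) by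
    rw [Cfun_eq_bernoulliFun]; field_simp]
  refine h_odd.congr_fun fun k => ?_
  rw [cfunCoeff]
  push_cast
  field_simp

theorem hasSum_cfunCoeff : HasSum cfunCoeff 1 := by
  convert hasSum_cfunCoeff_mul_cos 0 using 1 <;> norm_num [Cfun]

theorem hasSum_cfunCoeff_sq : HasSum (fun k => cfunCoeff k ^ 2) (2 / 3) := by
  have h_even : HasSum (fun k : ℕ => 1 / ((2 * k : ℕ) : ℝ) ^ 4) (π ^ 4 / 90 / 16) :=
    (hasSum_zeta_four.div_const 16).congr_fun fun k => by push_cast; ring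
  have h_odd := (hasSum_zeta_four.odd_of_even h_even).mul_left (64 / π ^ 4)
  rw [show (2 / 3 : ℝ) = 64 / π ^ 4 * (π ^ 4 / 90 - π ^ 4 / 90 / 16) by field_simp; norm_num]
  refine h_odd.congr_fun fun k => ?_
  rw [cfunCoeff]
  push_cast
  field_simp
  ring

theorem Sfun_eq_Cfun_sub (x : ℝ) : Sfun x = Cfun (x - 1 / 4) := by
  have h0 := Int.fract_nonneg x
  have h1 := Int.fract_lt_one x
  unfold Sfun Cfun
  rcases lt_or_ge (Int.fract x) (1 / 4) with h | h
  · have h_shift : Int.fract (x - 1 / 4) = Int.fract x + 3 / 4 :=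
      Int.fract_eq_iff.mpr ⟨by linarith, by linarith, ⌊x⌋ - 1, by push_cast; rw [Int.fract]; ring⟩
    rw [h_shift, abs_of_neg (by linarith : Int.fract x - 1 / 4 < 0), abs_of_pos (by linarith),
      abs_of_pos (by linarith)]
    ring
  · have h_shift : Int.fract (x - 1 / 4) = Int.fract x - 1 / 4 :=
      Int.fract_eq_iff.mpr ⟨by linarith, by linarith, ⌊x⌋, by rw [Int.fract]; ring⟩
    rw [h_shift, abs_of_nonneg (by linarith : 0 ≤ Int.fract x - 1 / 4)]
    rcases abs_cases (2 - 4 * (Int.fract x - 1 / 4)) with ⟨ha, _⟩ | ⟨ha, _⟩ <;>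
      rcases abs_cases (Int.fract x - 1 / 4 - 1 / 2) with ⟨hb, _⟩ | ⟨hb, _⟩ <;>
      linarith

theorem hasSum_integral_Cfun_sub_mul_Cfun_sub (m n : ℕ) (hm : 0 < m) (φ ψ : ℝ) :
    HasSum (fun kl : ℕ × ℕ => cfunCoeff kl.1 * cfunCoeff kl.2 *
      if (2 * kl.1 + 1) * m = (2 * kl.2 + 1) * n then
        cos (2 * π * ((2 * kl.2 + 1) * ψ - (2 * kl.1 + 1) * φ)) / 2 else 0)
      (∫ x in (0:ℝ)..1, Cfun (m * x - φ) * Cfun (n * x - ψ)) := by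
  have h_series (m : ℕ) (φ x : ℝ) : HasSum (fun k => cfunCoeff k *
      cos (2 * π * ((2 * k + 1) * m : ℕ) * x + -(2 * π * (2 * k + 1) * φ))) (Cfun (m * x - φ)) :=
    (hasSum_cfunCoeff_mul_cos (m * x - φ)).congr_fun fun k => by push_cast; ring_nf
  refine (hasSum_integral_mul_of_hasSum_cos (M := fun k => (2 * k + 1) * m)
    (N := fun l => (2 * l + 1) * n) (p := fun k => -(2 * π * (2 * k + 1) * φ))
    (q := fun l => -(2 * π * (2 * l + 1) * ψ)) hasSum_cfunCoeff.summable hasSum_cfunCoeff.summable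
    (fun k => Nat.mul_pos (2 * k).succ_pos hm) (h_series m φ) (h_series n ψ)).congr_fun
    fun kl => ?_
  ring_nf

theorem hasSum_integral_Cfun_mul_Cfun (i j : ℕ) (hi : 0 < i) :
    HasSum (fun kl : ℕ × ℕ => cfunCoeff kl.1 * cfunCoeff kl.2 *
      if (2 * kl.1 + 1) * i = (2 * kl.2 + 1) * j then 1 / 2 else 0)
      (∫ x in (0:ℝ)..1, Cfun (i * x) * Cfun (j * x)) := by
  simpa only [sub_zero, mul_zero, cos_zero] using
    hasSum_integral_Cfun_sub_mul_Cfun_sub i j hi 0 0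

theorem hasSum_cfunCoeff_mul_cfunCoeff :
    HasSum (fun kl : ℕ × ℕ => cfunCoeff kl.1 * cfunCoeff kl.2) 1 := by
  have h_abs : Summable fun k => ‖cfunCoeff k‖ := by
    simpa [norm_eq_abs, abs_of_nonneg (cfunCoeff_nonneg _)] using hasSum_cfunCoeff.summable
  simpa using hasSum_cfunCoeff.mul hasSum_cfunCoeff (summable_mul_of_summable_norm h_abs h_abs)

theorem integral_Cfun_mul_Cfun_nonneg (i j : ℕ) (hi : 0 < i) :
    0 ≤ ∫ x in (0:ℝ)..1, Cfun (i * x) * Cfun (j * x) := by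
  refine (hasSum_integral_Cfun_mul_Cfun i j hi).nonneg fun kl => mul_nonneg ?_ ?_
  · exact mul_nonneg (cfunCoeff_nonneg _) (cfunCoeff_nonneg _)
  · split_ifs <;> norm_num

theorem sum_integral_Cfun_mul_Cfun_le (i : ℕ) (hi : 0 < i) (s : Finset ℕ) :
    ∑ j ∈ s, ∫ x in (0:ℝ)..1, Cfun (i * x) * Cfun (j * x) ≤ 1 / 2 := by
  refine (one_mul (1 / 2 : ℝ)) ▸ sum_le_of_hasSum_mul
    (fun kl => mul_nonneg (cfunCoeff_nonneg _) (cfunCoeff_nonneg _))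
    hasSum_cfunCoeff_mul_cfunCoeff (fun j _ => hasSum_integral_Cfun_mul_Cfun i j hi)
    fun kl => Finset.sum_ite_le_of_subsingleton (fun j j' hj hj' => ?_) (by norm_num)
  exact Nat.eq_of_mul_eq_mul_left (2 * kl.2).succ_pos (hj.symm.trans hj')

theorem integral_Cfun_sub_mul_self (i : ℕ) (hi : 0 < i) (φ : ℝ) :
    ∫ x in (0:ℝ)..1, Cfun (i * x - φ) * Cfun (i * x - φ) = 1 / 3 := by
  refine (hasSum_integral_Cfun_sub_mul_Cfun_sub i i hi φ φ).unique ?_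
  have h_diag : Function.Injective fun k : ℕ => (k, k) := fun k l h => (Prod.ext_iff.mp h).1
  refine (h_diag.hasSum_iff fun kl hkl => ?_).mp ?_
  · rw [if_neg fun h => hkl ⟨kl.1, ?_⟩, mul_zero]
    have := Nat.eq_of_mul_eq_mul_right hi h
    exact Prod.ext rfl (by dsimp only; omega)
  · rw [show (1 / 3 : ℝ) = 2 / 3 / 2 by norm_num]
    refine (hasSum_cfunCoeff_sq.div_const 2).congr_fun fun k => ?_
    simp only [Function.comp_apply, sub_self, mul_zero, cos_zero, ↓reduceIte]
    ring

theorem integral_Cfun_mul_Cfun_self (i : ℕ) (hi : 0 < i) :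
    ∫ x in (0:ℝ)..1, Cfun (i * x) * Cfun (i * x) = 1 / 3 := by
  simpa only [sub_zero] using integral_Cfun_sub_mul_self i hi 0

theorem integral_Sfun_mul_Sfun_self (i : ℕ) (hi : 0 < i) :
    ∫ x in (0:ℝ)..1, Sfun (i * x) * Sfun (i * x) = 1 / 3 := by
  simpa only [← Sfun_eq_Cfun_sub] using integral_Cfun_sub_mul_self i hi (1 / 4)

theorem abs_integral_Sfun_mul_Sfun_le (i j : ℕ) (hi : 0 < i) :
    |∫ x in (0:ℝ)..1, Sfun (i * x) * Sfun (j * x)| ≤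
      ∫ x in (0:ℝ)..1, Cfun (i * x) * Cfun (j * x) := by
  simp_rw [Sfun_eq_Cfun_sub]
  refine (hasSum_integral_Cfun_sub_mul_Cfun_sub i j hi _ _).norm_le_of_bounded
    (hasSum_integral_Cfun_mul_Cfun i j hi) fun kl => ?_
  have h_weight := mul_nonneg (cfunCoeff_nonneg kl.1) (cfunCoeff_nonneg kl.2)
  rw [norm_mul, norm_of_nonneg h_weight]
  refine mul_le_mul_of_nonneg_left ?_ h_weight
  split_ifs
  · rw [norm_div, norm_eq_abs, Real.norm_two]
    linarith [abs_cos_le_one (2 * π * ((2 * kl.2 + 1) * (1 / 4) - (2 * kl.1 + 1) * (1 / 4)))]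
  · simp

/-- Row-sum bounds for the Gram matrix: for every `i ≥ 1`, all the inner products
`⟨𝒞_i, 𝒞_j⟩` are nonnegative, the series `Σ_j 3⟨𝒞_i, 𝒞_j⟩` converges,
`Σ_{j≠i} 3⟨𝒞_i, 𝒞_j⟩ ≤ 1/2` (equivalently `Σ_j 3⟨𝒞_i, 𝒞_j⟩ ≤ 3/2`), and likewise
`Σ_{j≠i} 3|⟨𝒮_i, 𝒮_j⟩| ≤ 1/2`. -/
theorem gram_row_sum_bound (i : ℕ) (hi : 0 < i) :
    (∀ j : ℕ, 0 < j → 0 ≤ ∫ x in (0:ℝ)..1, Cfun (i * x) * Cfun (j * x)) ∧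
    Summable (fun j : ℕ => 3 * ∫ x in (0:ℝ)..1, Cfun (i * x) * Cfun ((j + 1) * x)) ∧
    (∑' j : {j : ℕ // j + 1 ≠ i}, 3 * ∫ x in (0:ℝ)..1,
        Cfun (i * x) * Cfun (((j : ℕ) + 1) * x)) ≤ 1 / 2 ∧
    (∑' j : ℕ, 3 * ∫ x in (0:ℝ)..1, Cfun (i * x) * Cfun ((j + 1) * x)) ≤ 3 / 2 ∧
    Summable (fun j : ℕ => 3 * |∫ x in (0:ℝ)..1, Sfun (i * x) * Sfun ((j + 1) * x)|) ∧
    (∑' j : {j : ℕ // j + 1 ≠ i}, 3 * |∫ x in (0:ℝ)..1,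
        Sfun (i * x) * Sfun (((j : ℕ) + 1) * x)|) ≤ 1 / 2 := by
  set c : ℕ → ℝ := fun j => 3 * ∫ x in (0:ℝ)..1, Cfun (i * x) * Cfun ((j + 1) * x) with hc
  set s : ℕ → ℝ := fun j => 3 * |∫ x in (0:ℝ)..1, Sfun (i * x) * Sfun ((j + 1) * x)| with hs
  have hc0 (j : ℕ) : 0 ≤ c j := by
    have := integral_Cfun_mul_Cfun_nonneg i (j + 1) hi
    push_cast at this
    positivity
  have hsc (j : ℕ) : s j ≤ c j := by
    have := abs_integral_Sfun_mul_Sfun_le i (j + 1) hi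
    push_cast at this
    linarith
  have hc_partial (N : ℕ) : ∑ j ∈ Finset.range N, c j ≤ 3 / 2 := by
    have := sum_integral_Cfun_mul_Cfun_le i hi ((Finset.range N).map (addRightEmbedding 1))
    simp only [Finset.sum_map, addRightEmbedding_apply, Nat.cast_add, Nat.cast_one] at this
    rw [hc, ← Finset.mul_sum]
    linarith
  have hc_summable : Summable c := summable_of_sum_range_le hc0 hc_partial
  have hc_tsum : ∑' j, c j ≤ 3 / 2 := Real.tsum_le_of_sum_range_le hc0 hc_partial
  have hs_summable : Summable s := hc_summable.of_nonneg_of_le (fun j => by positivity) hsc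
  have hc_diag : c (i - 1) = 1 := by
    simp only [hc, Nat.cast_pred hi, sub_add_cancel, integral_Cfun_mul_Cfun_self i hi]
    norm_num
  have hs_diag : s (i - 1) = 1 := by
    simp only [hs, Nat.cast_pred hi, sub_add_cancel, integral_Sfun_mul_Sfun_self i hi]
    norm_num
  have h_ne (j : ℕ) : ¬(j + 1 ≠ i) ↔ j = i - 1 := by omega
  refine ⟨fun j _ => integral_Cfun_mul_Cfun_nonneg i j hi, hc_summable, ?_,
    hc_tsum, hs_summable, ?_⟩
  · rw [tsum_subtype_eq_tsum_sub hc_summable h_ne]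
    linarith
  · rw [tsum_subtype_eq_tsum_sub hs_summable h_ne]
    linarith [hs_summable.tsum_le_tsum hsc hc_summable]
end

section
/- Let d ≥ 1 and let α, β ∈ ℤ^d with α ▹ 0 and β ▹ 0. If there exist no odd positive integers a and b with a·α = b·β (in particular, if α and β are not co-linear, or if α = t·β with t > 0 not a ratio of two odd positive integers), then ⟨𝒞(α·x), 𝒞(β·x)⟩ = 0 and ⟨𝒮(α·x), 𝒮(β·x)⟩ = 0 in L²([0,1]^d). -/
open MeasureTheory Filter Topology

/-- `α ▹ 0`: the first nonzero entry of the integer vector `α` is positive. -/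
def PosLead {d : ℕ} (α : Fin d → ℤ) : Prop :=
  ∃ i : Fin d, 0 < α i ∧ ∀ j : Fin d, j < i → α j = 0

open Real

/-!
The Fourier series of the periodic Bernoulli polynomial `B₂({x})` together with the identity
`𝒞(x) = 8 (B₂({x}) - B₂({2x}) / 4)` keeps only the odd frequencies:
`𝒞(x) = 8/π² ∑ₙ cos(2π(2n+1)x) / (2n+1)²`, and `𝒮(x) = 𝒞(x - 1/4)`.
Multiplying the two absolutely convergent expansions of `𝒞(α·x + s)` and `𝒞(β·x + t)`, the
integral over the cube becomes a double series of integrals of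
`cos(2π a α·x + φ) cos(2π b β·x + ψ)` with `a, b` odd. Each vanishes: the product is a sum of
`cos(2π (aα ∓ bβ)·x + const)`, and for `γ ≠ 0` the integral of `cos(2π γ·x + c)` is zero, being
the real part of `e^{ic} ∏ⱼ ∫₀¹ e^{2πi γⱼ t} dt`. Here `aα - bβ ≠ 0` is the hypothesis, and
`aα + bβ ≠ 0` because `aα` and `bβ` are both `▹ 0`.
-/

theorem hasSum_one_div_nat_sq_mul_cos (x : ℝ) :
    HasSum (fun n : ℕ => 1 / (n : ℝ) ^ 2 * cos (2 * π * n * x))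
      (π ^ 2 * bernoulliFun 2 (Int.fract x)) := by
  have h := hasSum_one_div_nat_pow_mul_cos one_ne_zero
    (⟨Int.fract_nonneg x, (Int.fract_lt_one x).le⟩ : Int.fract x ∈ Set.Icc (0 : ℝ) 1)
  have hper (n : ℕ) : cos (2 * π * n * x) = cos (2 * π * n * Int.fract x) := by
    rw [← Int.self_sub_floor, mul_sub,
      show 2 * π * n * (⌊x⌋ : ℝ) = ((n * ⌊x⌋ : ℤ) : ℝ) * (2 * π) by push_cast; ring,
      cos_sub_int_mul_two_pi]
  convert h using 2 with n
  · rw [hper, mul_one]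
  · norm_num
    ring
  · rfl

theorem hasSum_Cfun (x : ℝ) :
    HasSum (fun n : ℕ => 8 / π ^ 2 / (2 * n + 1) ^ 2 * cos (2 * π * (2 * n + 1) * x))
      (Cfun x) := by
  set f : ℕ → ℝ := fun n => 1 / (n : ℝ) ^ 2 * cos (2 * π * n * x) with hf
  have hall : HasSum f (π ^ 2 * bernoulliFun 2 (Int.fract x)) := hasSum_one_div_nat_sq_mul_cos x
  have heven : HasSum (fun n => f (2 * n)) (π ^ 2 * bernoulliFun 2 (Int.fract (2 * x)) / 4) :=
    ((hasSum_one_div_nat_sq_mul_cos (2 * x)).div_const 4).congr_fun fun n => by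
      -- at `n = 0` both sides are `0`, as `1 / 0 = 0`
      rw [hf]
      push_cast
      ring_nf
  have hodd : HasSum (fun n => f (2 * n + 1))
      (π ^ 2 * bernoulliFun 2 (Int.fract x) - π ^ 2 * bernoulliFun 2 (Int.fract (2 * x)) / 4) := by
    obtain ⟨o, ho⟩ : Summable fun n => f (2 * n + 1) :=
      hall.summable.comp_injective fun a b h => by omega
    rwa [hall.unique (heven.even_add_odd ho), add_sub_cancel_left]
  rw [show Cfun x = 8 / π ^ 2 * (π ^ 2 * bernoulliFun 2 (Int.fract x)
      - π ^ 2 * bernoulliFun 2 (Int.fract (2 * x)) / 4) by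
    rw [Cfun_eq_bernoulliFun]; field_simp]
  exact (hodd.mul_left _).congr_fun fun n => by
    rw [hf]
    push_cast
    ring

noncomputable def cosWave {d : ℕ} (γ : Fin d → ℤ) (φ : ℝ) (x : Fin d → ℝ) : ℝ :=
  cos (2 * π * ∑ i, (γ i : ℝ) * x i + φ)

@[fun_prop]
theorem continuous_cosWave {d : ℕ} (γ : Fin d → ℤ) (φ : ℝ) : Continuous (cosWave γ φ) := by
  unfold cosWave
  fun_prop

theorem volume_restrict_Icc_eq_pi {ι : Type*} [Fintype ι] (a b : ι → ℝ) :
    volume.restrict (Set.Icc a b) = Measure.pi fun i => volume.restrict (Set.Icc (a i) (b i)) := by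
  rw [← Set.pi_univ_Icc, volume_pi, Measure.restrict_pi_pi]

theorem integral_Icc_exp_two_pi_int_mul_I {k : ℤ} (hk : k ≠ 0) :
    ∫ t in Set.Icc (0 : ℝ) 1, Complex.exp (2 * π * k * t * Complex.I) = 0 := by
  have hc : (2 * π * k * Complex.I : ℂ) ≠ 0 := by
    simp [Real.pi_ne_zero, hk, Complex.I_ne_zero]
  rw [integral_Icc_eq_integral_Ioc, ← intervalIntegral.integral_of_le zero_le_one]
  simp_rw [show ∀ t : ℝ, (2 * π * k * t * Complex.I : ℂ) = (2 * π * k * Complex.I) * t by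
    intro t; ring]
  rw [integral_exp_mul_complex hc]
  simp [show (2 * π * k * Complex.I : ℂ) = k * (2 * π * Complex.I) by ring]

theorem integral_Icc_cosWave {d : ℕ} {γ : Fin d → ℤ} (hγ : γ ≠ 0) (φ : ℝ) :
    ∫ x in Set.Icc (0 : Fin d → ℝ) 1, cosWave γ φ x = 0 := by
  obtain ⟨j, hj⟩ := Function.ne_iff.mp hγ
  have hexp (x : Fin d → ℝ) : cosWave γ φ x =
      (Complex.exp (φ * Complex.I) * ∏ i, Complex.exp (2 * π * γ i * x i * Complex.I)).re := by
    rw [cosWave, ← Complex.exp_sum, ← Complex.exp_add, ← Complex.exp_ofReal_mul_I_re]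
    congr 2
    push_cast
    rw [Finset.mul_sum, add_mul, Finset.sum_mul, add_comm]
    ring_nf
  have hre := integral_re (μ := volume.restrict (Set.Icc (0 : Fin d → ℝ) 1))
    (Continuous.integrableOn_Icc (by fun_prop) : IntegrableOn (fun x : Fin d → ℝ =>
      Complex.exp (φ * Complex.I) * ∏ i, Complex.exp (2 * π * γ i * x i * Complex.I)) _ _)
  simp only [RCLike.re_to_complex] at hre
  simp_rw [hexp]
  rw [hre, integral_const_mul, volume_restrict_Icc_eq_pi,
    integral_fintype_prod_eq_prod (fun i (t : ℝ) => Complex.exp (2 * π * γ i * t * Complex.I)),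
    Finset.prod_eq_zero (Finset.mem_univ j) (integral_Icc_exp_two_pi_int_mul_I hj),
    mul_zero, Complex.zero_re]

theorem cosWave_mul_cosWave {d : ℕ} (γ δ : Fin d → ℤ) (φ ψ : ℝ) (x : Fin d → ℝ) :
    cosWave γ φ x * cosWave δ ψ x =
      (cosWave (γ - δ) (φ - ψ) x + cosWave (γ + δ) (φ + ψ) x) / 2 := by
  simp only [cosWave, Pi.sub_apply, Pi.add_apply, Int.cast_sub, Int.cast_add, sub_mul, add_mul,
    Finset.sum_sub_distrib, Finset.sum_add_distrib]
  rw [eq_div_iff two_ne_zero, mul_comm, ← mul_assoc, two_mul_cos_mul_cos]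
  ring_nf

theorem integral_Icc_cosWave_mul_cosWave {d : ℕ} {γ δ : Fin d → ℤ} (hsub : γ ≠ δ)
    (hadd : γ ≠ -δ) (φ ψ : ℝ) :
    ∫ x in Set.Icc (0 : Fin d → ℝ) 1, cosWave γ φ x * cosWave δ ψ x = 0 := by
  simp_rw [cosWave_mul_cosWave]
  rw [integral_div, integral_add (continuous_cosWave _ _).integrableOn_Icc
      (continuous_cosWave _ _).integrableOn_Icc,
    integral_Icc_cosWave (sub_ne_zero.mpr hsub),
    integral_Icc_cosWave (by rwa [Ne, ← eq_neg_iff_add_eq_zero]), add_zero, zero_div]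

theorem hasSum_Cfun_dot_add {d : ℕ} (γ : Fin d → ℤ) (s : ℝ) (x : Fin d → ℝ) :
    HasSum (fun n : ℕ => 8 / π ^ 2 / (2 * n + 1) ^ 2 *
        cosWave (((2 * n + 1 : ℕ) : ℤ) • γ) (2 * π * (2 * n + 1) * s) x)
      (Cfun (∑ i, (γ i : ℝ) * x i + s)) :=
  (hasSum_Cfun _).congr_fun fun n => by
    simp only [cosWave, Pi.smul_apply, smul_eq_mul]
    push_cast
    simp only [mul_assoc, ← Finset.mul_sum]
    ring_nf

theorem integral_mul_eq_zero_of_hasSum {ι κ X : Type*} [Countable ι] [Countable κ]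
    [MeasurableSpace X] {μ : Measure X} [IsFiniteMeasure μ] {f : ι → X → ℝ} {g : κ → X → ℝ}
    {F G : X → ℝ} {a : ι → ℝ} {b : κ → ℝ} (ha : Summable a) (hb : Summable b)
    (hfa : ∀ n x, ‖f n x‖ ≤ a n) (hgb : ∀ m x, ‖g m x‖ ≤ b m)
    (hf : ∀ n, AEStronglyMeasurable (f n) μ) (hg : ∀ m, AEStronglyMeasurable (g m) μ)
    (hF : ∀ x, HasSum (f · x) (F x)) (hG : ∀ x, HasSum (g · x) (G x))
    (horth : ∀ n m, ∫ x, f n x * g m x ∂μ = 0) :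
    ∫ x, F x * G x ∂μ = 0 := by
  have hprod (x : X) : HasSum (fun p : ι × κ => f p.1 x * g p.2 x) (F x * G x) :=
    (hF x).mul (hG x) <| summable_mul_of_summable_norm
      (ha.of_nonneg_of_le (fun _ => norm_nonneg _) (hfa · x))
      (hb.of_nonneg_of_le (fun _ => norm_nonneg _) (hgb · x))
  have hbound (p : ι × κ) (x : X) : ‖f p.1 x * g p.2 x‖ ≤ a p.1 * b p.2 := by
    rw [norm_mul]
    exact mul_le_mul (hfa _ x) (hgb _ x) (norm_nonneg _) ((norm_nonneg _).trans (hfa _ x))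
  have hint : HasSum (fun p : ι × κ => ∫ x, f p.1 x * g p.2 x ∂μ) (∫ x, F x * G x ∂μ) :=
    hasSum_integral_of_dominated_convergence (fun p _ => a p.1 * b p.2)
      (fun p => (hf p.1).mul (hg p.2)) (fun p => ae_of_all _ (hbound p))
      (ae_of_all _ fun _ => summable_mul_of_summable_norm ha.norm hb.norm)
      (integrable_const _) (ae_of_all _ hprod)
  simp only [horth] at hint
  exact hint.unique hasSum_zero

theorem integral_Icc_Cfun_mul_Cfun {d : ℕ} {α β : Fin d → ℤ}
    (hsub : ∀ a b : ℕ, Odd a → Odd b → (a : ℤ) • α ≠ (b : ℤ) • β)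
    (hadd : ∀ a b : ℕ, Odd a → Odd b → (a : ℤ) • α ≠ -((b : ℤ) • β)) (s t : ℝ) :
    ∫ x in Set.Icc (0 : Fin d → ℝ) 1,
      Cfun (∑ i, (α i : ℝ) * x i + s) * Cfun (∑ i, (β i : ℝ) * x i + t) = 0 := by
  set c : ℕ → ℝ := fun n => 8 / π ^ 2 / (2 * n + 1) ^ 2
  have hc : Summable c := by simpa using (hasSum_Cfun 0).summable
  have hbound (γ : Fin d → ℤ) (φ : ℝ) (n : ℕ) (x : Fin d → ℝ) : ‖c n * cosWave γ φ x‖ ≤ c n := by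
    rw [norm_mul, Real.norm_of_nonneg (by positivity)]
    exact mul_le_of_le_one_right (by positivity) (abs_cos_le_one _)
  have : IsFiniteMeasure (volume.restrict (Set.Icc (0 : Fin d → ℝ) 1)) := by
    rw [volume_restrict_Icc_eq_pi]
    infer_instance
  refine integral_mul_eq_zero_of_hasSum hc hc (fun n => hbound _ _ n) (fun m => hbound _ _ m)
    (fun n => ((continuous_cosWave _ _).const_mul (c n)).aestronglyMeasurable)
    (fun m => ((continuous_cosWave _ _).const_mul (c m)).aestronglyMeasurable)
    (hasSum_Cfun_dot_add α s) (hasSum_Cfun_dot_add β t) fun n m => ?_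
  simp_rw [mul_mul_mul_comm]
  rw [integral_const_mul, integral_Icc_cosWave_mul_cosWave, mul_zero]
  · exact hsub _ _ (odd_two_mul_add_one n) (odd_two_mul_add_one m)
  · exact hadd _ _ (odd_two_mul_add_one n) (odd_two_mul_add_one m)

theorem PosLead.smul {d : ℕ} {α : Fin d → ℤ} (h : PosLead α) {a : ℤ} (ha : 0 < a) :
    PosLead (a • α) := by
  obtain ⟨i, hi, h0⟩ := h
  exact ⟨i, mul_pos ha hi, fun j hj => by simp [h0 j hj]⟩

theorem PosLead.not_neg {d : ℕ} {α : Fin d → ℤ} (h : PosLead α) : ¬ PosLead (-α) := by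
  rintro ⟨j, hj, hj0⟩
  obtain ⟨i, hi, hi0⟩ := h
  rcases lt_trichotomy i j with hij | rfl | hji
  · exact hi.ne' (neg_eq_zero.mp (hj0 i hij))
  · exact lt_asymm (neg_pos.mp hj) hi
  · simp [hi0 j hji] at hj

theorem inner_CC_SS_multivariate_eq_zero_general (d : ℕ) (α β : Fin d → ℤ)
    (hα : PosLead α) (hβ : PosLead β)
    (h : ¬ ∃ a b : ℕ, Odd a ∧ Odd b ∧ 0 < a ∧ 0 < b ∧ ∀ i, (a : ℤ) * α i = (b : ℤ) * β i) :
    (∫ x in Set.Icc (0 : Fin d → ℝ) 1,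
        Cfun (∑ i, (α i : ℝ) * x i) * Cfun (∑ i, (β i : ℝ) * x i) = 0) ∧
    (∫ x in Set.Icc (0 : Fin d → ℝ) 1,
        Sfun (∑ i, (α i : ℝ) * x i) * Sfun (∑ i, (β i : ℝ) * x i) = 0) := by
  have hsub (a b : ℕ) (ha : Odd a) (hb : Odd b) : (a : ℤ) • α ≠ (b : ℤ) • β := fun hab =>
    h ⟨a, b, ha, hb, ha.pos, hb.pos, fun i => congrFun hab i⟩
  have hadd (a b : ℕ) (ha : Odd a) (hb : Odd b) : (a : ℤ) • α ≠ -((b : ℤ) • β) := fun hab =>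
    (hβ.smul (Int.natCast_pos.mpr hb.pos)).not_neg (hab ▸ hα.smul (Int.natCast_pos.mpr ha.pos))
  constructor
  · simpa using integral_Icc_Cfun_mul_Cfun hsub hadd 0 0
  · simp_rw [Sfun_eq_Cfun_sub, sub_eq_add_neg]
    exact integral_Icc_Cfun_mul_Cfun hsub hadd _ _

/-- If there are no odd positive integers `a, b` with `a·α = b·β` (in particular if `α, β`
are not co-linear, or co-linear with a factor which is not a ratio of two odd positive
integers), then `⟨𝒞(α·x), 𝒞(β·x)⟩ = 0` and `⟨𝒮(α·x), 𝒮(β·x)⟩ = 0` in `L²([0,1]^d)`. -/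
theorem inner_CC_SS_multivariate_eq_zero (d : ℕ) (hd : 1 ≤ d) (α β : Fin d → ℤ)
    (hα : PosLead α) (hβ : PosLead β)
    (h : ¬ ∃ a b : ℕ, Odd a ∧ Odd b ∧ 0 < a ∧ 0 < b ∧ ∀ i, (a : ℤ) * α i = (b : ℤ) * β i) :
    (∫ x in Set.Icc (0 : Fin d → ℝ) 1,
        Cfun (∑ i, (α i : ℝ) * x i) * Cfun (∑ i, (β i : ℝ) * x i) = 0) ∧
    (∫ x in Set.Icc (0 : Fin d → ℝ) 1,
        Sfun (∑ i, (α i : ℝ) * x i) * Sfun (∑ i, (β i : ℝ) * x i) = 0) :=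
  inner_CC_SS_multivariate_eq_zero_general d α β hα hβ h
end

section
/- The sum over all pairs (p, q) of odd positive integers with gcd(p, q) = 1 of 1/(p²·q²) equals 3/2: Σ_{p,q ≥ 1 odd, gcd(p,q)=1} 1/(p²q²) = 3/2. -/
/-!
Every pair of odd numbers is uniquely `d • (p, q)` with `d` odd and `(p, q)` a coprime odd pair
(take `d = gcd`). Since `n ↦ n⁻²` is completely multiplicative, the sum `S` in question satisfies
`(∑_{n odd} n⁻²)² = (∑_{d odd} d⁻⁴) · S`, that is `(π²/8)² = (π⁴/96) · S`, so `S = 3/2`.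
The odd sums come from `ζ(2) = π²/6` and `ζ(4) = π⁴/90` after removing the even terms,
which contribute `2⁻ᵏ ζ(k)`.
-/

open Real

abbrev OddPairs : Type := {pq : ℕ × ℕ // Odd pq.1 ∧ Odd pq.2}

abbrev CoprimeOddPairs : Type := {pq : ℕ × ℕ // Odd pq.1 ∧ Odd pq.2 ∧ Nat.gcd pq.1 pq.2 = 1}

lemma hasSum_one_div_odd_pow {k : ℕ} {a : ℝ} (h : HasSum (fun n : ℕ => 1 / (n : ℝ) ^ k) a) :
    HasSum (fun n : {n : ℕ // Odd n} => 1 / (n : ℝ) ^ k) ((1 - 1 / 2 ^ k) * a) := by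
  have hodd : (Set.range (2 * · : ℕ → ℕ))ᶜ = {n | Odd n} := by
    ext n
    simp only [Set.mem_compl_iff, Set.mem_range, Set.mem_ofPred_eq, ← Nat.not_even_iff_odd,
      even_iff_two_dvd, Dvd.dvd, eq_comm]
  have heven : HasSum ((fun n : ℕ => 1 / (n : ℝ) ^ k) ∘ (↑) : Set.range (2 * · : ℕ → ℕ) → ℝ)
      (a / 2 ^ k) := by
    refine ((mul_right_injective₀ (two_ne_zero : (2 : ℕ) ≠ 0)).hasSum_range_iff
      (f := fun n : ℕ => 1 / (n : ℝ) ^ k)).2 ?_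
    have hscale :
        (fun n : ℕ => 1 / (n : ℝ) ^ k) ∘ (2 * ·) = fun n : ℕ => 1 / (n : ℝ) ^ k / 2 ^ k := by
      funext n
      simp only [Function.comp_apply, Nat.cast_mul, Nat.cast_ofNat]
      ring
    rw [hscale]
    exact h.div_const _
  have hsplit := heven.hasSum_iff_compl.1 h
  rw [hodd] at hsplit
  rwa [show (1 - 1 / 2 ^ k) * a = a - a / 2 ^ k by ring]

lemma hasSum_one_div_odd_sq : HasSum (fun n : {n : ℕ // Odd n} => 1 / (n : ℝ) ^ 2) (π ^ 2 / 8) := by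
  convert hasSum_one_div_odd_pow hasSum_zeta_two using 1
  ring

lemma hasSum_one_div_odd_pow_four :
    HasSum (fun n : {n : ℕ // Odd n} => 1 / (n : ℝ) ^ 4) (π ^ 4 / 96) := by
  convert hasSum_one_div_odd_pow hasSum_zeta_four using 1
  ring

def oddMulCoprimeOddPairsEquiv : {d : ℕ // Odd d} × CoprimeOddPairs ≃ OddPairs where
  toFun x := ⟨(x.1 * x.2.1.1, x.1 * x.2.1.2), x.1.2.mul x.2.2.1, x.1.2.mul x.2.2.2.1⟩
  invFun x :=
    let g := Nat.gcd x.1.1 x.1.2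
    ⟨⟨g, x.2.1.of_dvd_nat (Nat.gcd_dvd_left _ _)⟩,
      ⟨(x.1.1 / g, x.1.2 / g),
        x.2.1.of_dvd_nat (Nat.div_dvd_of_dvd (Nat.gcd_dvd_left _ _)),
        x.2.2.of_dvd_nat (Nat.div_dvd_of_dvd (Nat.gcd_dvd_right _ _)),
        Nat.coprime_div_gcd_div_gcd (Nat.gcd_pos_of_pos_left _ x.2.1.pos)⟩⟩
  left_inv := by
    rintro ⟨⟨d, hd⟩, ⟨⟨p, q⟩, hp, hq, hpq⟩⟩
    have hgcd : Nat.gcd (d * p) (d * q) = d := by rw [Nat.gcd_mul_left, hpq, mul_one]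
    ext <;> simp [hgcd, hd.pos]
  right_inv := by
    rintro ⟨⟨a, b⟩, ha, hb⟩
    ext <;> simp [Nat.mul_div_cancel' (Nat.gcd_dvd_left a b),
      Nat.mul_div_cancel' (Nat.gcd_dvd_right a b)]

noncomputable def invSqProd (pq : ℕ × ℕ) : ℝ := 1 / ((pq.1 : ℝ) ^ 2 * (pq.2 : ℝ) ^ 2)

lemma hasSum_odd_pairs : HasSum (fun pq : OddPairs => invSqProd pq) ((π ^ 2 / 8) ^ 2) := by
  have hs := hasSum_one_div_odd_sq.summable
  have hnonneg : 0 ≤ fun n : {n : ℕ // Odd n} => 1 / (n : ℝ) ^ 2 := fun n => by positivity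
  have hprod :=
    hasSum_one_div_odd_sq.mul hasSum_one_div_odd_sq (hs.mul_of_nonneg hs hnonneg hnonneg)
  have hfun : (fun pq : OddPairs => invSqProd pq) ∘ Equiv.subtypeProdEquivProd.symm =
      fun x => 1 / (x.1 : ℝ) ^ 2 * (1 / (x.2 : ℝ) ^ 2) := by
    funext x
    exact (one_div_mul_one_div _ _).symm
  rw [sq, ← Equiv.subtypeProdEquivProd.symm.hasSum_iff, hfun]
  exact hprod

lemma summable_coprime_odd_pairs : Summable (fun pq : CoprimeOddPairs => invSqProd pq) :=
  hasSum_odd_pairs.summable.comp_injective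
    (i := fun pq : CoprimeOddPairs => (⟨pq.1, pq.2.1, pq.2.2.1⟩ : OddPairs))
    (Function.Injective.of_comp (f := Subtype.val) Subtype.val_injective)

lemma hasSum_odd_mul_coprime_odd_pairs :
    HasSum (fun x : {d : ℕ // Odd d} × CoprimeOddPairs => 1 / (x.1 : ℝ) ^ 4 * invSqProd x.2)
      ((π ^ 2 / 8) ^ 2) := by
  have hfun : (fun pq : OddPairs => invSqProd pq) ∘ oddMulCoprimeOddPairsEquiv =
      fun x => 1 / (x.1 : ℝ) ^ 4 * invSqProd x.2 := by
    funext x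
    simp only [Function.comp_apply, oddMulCoprimeOddPairsEquiv, Equiv.coe_fn_mk, invSqProd,
      Nat.cast_mul]
    ring
  rw [← hfun]
  exact oddMulCoprimeOddPairsEquiv.hasSum_iff.2 hasSum_odd_pairs

/-- The sum over all ordered pairs `(p, q)` of coprime odd positive integers of
`1/(p²q²)` equals `3/2`. -/
theorem sum_coprime_odd_pairs :
    HasSum
      (fun pq : {pq : ℕ × ℕ // Odd pq.1 ∧ Odd pq.2 ∧ Nat.gcd pq.1 pq.2 = 1} =>
        1 / (((pq : ℕ × ℕ).1 : ℝ) ^ 2 * ((pq : ℕ × ℕ).2 : ℝ) ^ 2))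
      (3 / 2) := by
  have hC := summable_coprime_odd_pairs
  have hprod := hasSum_one_div_odd_pow_four.mul hC.hasSum
    (hasSum_one_div_odd_pow_four.summable.mul_of_nonneg hC (fun n => by positivity)
      fun pq => by simp only [Pi.zero_apply, invSqProd]; positivity)
  have hvalue : π ^ 4 / 96 * ∑' pq : CoprimeOddPairs, invSqProd pq = (π ^ 2 / 8) ^ 2 :=
    hprod.unique hasSum_odd_mul_coprime_odd_pairs
  have hS : ∑' pq : CoprimeOddPairs, invSqProd pq = 3 / 2 := by
    field_simp at hvalue
    linarith
  exact hS ▸ hC.hasSum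
end

section
/- Let d > 1 and α ∈ ℤ^d \ {0}. Then, restricted to x ∈ [0,1]^d, the function x ↦ 𝒞(α·x) belongs to Υ^{2, ⌈log₂ ‖α‖₁⌉+2} and the function x ↦ 𝒮(α·x) belongs to Υ^{2, ⌈log₂ ‖α‖₁⌉+3}, where ‖α‖₁ = |α₁| + … + |α_d|. Moreover, the networks can be chosen so that all entries of the weight matrices and of the bias vectors are bounded in absolute value by 8. -/
/-- The REctified Linear Unit. -/
noncomputable def relu (t : ℝ) : ℝ := max 0 t

/-- `hiddenChain A b n v` applies `n` hidden layers (ReLU after an affine map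
`w ↦ (A i) w + b i`, for `i = 0, …, n-1`) to the vector `v`. -/
noncomputable def hiddenChain {W : ℕ} (A : ℕ → Matrix (Fin W) (Fin W) ℝ)
    (b : ℕ → Fin W → ℝ) : ℕ → (Fin W → ℝ) → (Fin W → ℝ)
  | 0, v => v
  | n + 1, v => fun i => relu ((A n).mulVec (hiddenChain A b n v) i + b n i)

/-- The function `ℝ^d → ℝ` computed by a feed-forward ReLU network of width `W` and depth
`L`, given by the affine maps `x ↦ A0 x + b0 : ℝ^d → ℝ^W`, `v ↦ (A l) v + b l : ℝ^W → ℝ^W`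
for `l = 0, …, L-2`, and `v ↦ AL ⬝ v + bL : ℝ^W → ℝ`; i.e.
`A^{(L)} ∘ ReLU ∘ A^{(L-1)} ∘ ⋯ ∘ ReLU ∘ A^{(0)}`. -/
noncomputable def netFun (d W L : ℕ) (A0 : Matrix (Fin W) (Fin d) ℝ) (b0 : Fin W → ℝ)
    (A : ℕ → Matrix (Fin W) (Fin W) ℝ) (b : ℕ → Fin W → ℝ)
    (AL : Fin W → ℝ) (bL : ℝ) (x : Fin d → ℝ) : ℝ :=
  (∑ i, AL i * hiddenChain A b (L - 1) (fun i => relu (A0.mulVec x i + b0 i)) i) + bL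

/-- `MemUpsilonOn d W L M f D` says that `f : ℝ^d → ℝ` agrees on `D` with a function in
`Υ^{W,L}`, i.e. one computed by a feed-forward ReLU network of width `W` and depth `L ≥ 1`,
all of whose weight-matrix entries and bias-vector entries are bounded in absolute value
by `M`. -/
def MemUpsilonOn (d W L : ℕ) (M : ℝ) (f : (Fin d → ℝ) → ℝ) (D : Set (Fin d → ℝ)) : Prop :=
  1 ≤ L ∧
  ∃ (A0 : Matrix (Fin W) (Fin d) ℝ) (b0 : Fin W → ℝ)
    (A : ℕ → Matrix (Fin W) (Fin W) ℝ) (b : ℕ → Fin W → ℝ)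
    (AL : Fin W → ℝ) (bL : ℝ),
    (∀ i j, |A0 i j| ≤ M) ∧ (∀ i, |b0 i| ≤ M) ∧
    (∀ l, l < L - 1 → (∀ i j, |A l i j| ≤ M) ∧ (∀ i, |b l i| ≤ M)) ∧
    (∀ i, |AL i| ≤ M) ∧ |bL| ≤ M ∧
    ∀ x ∈ D, f x = netFun d W L A0 b0 A b AL bL x

noncomputable def uu (x : ℝ) : ℝ := 2 * |Int.fract x - 1/2|
noncomputable def FF (t : ℝ) : ℝ := |2*t - 1|

lemma relu_abs (s : ℝ) : relu s + relu (-s) = |s| := by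
  rcases le_total 0 s with h | h
  · rw [relu, relu, max_eq_right h, max_eq_left (by linarith), abs_of_nonneg h]; ring
  · rw [relu, relu, max_eq_left (by linarith), max_eq_right (by linarith), abs_of_nonpos h]; ring

lemma fract_two_mul (x : ℝ) :
    Int.fract (2*x) = if Int.fract x < 1/2 then 2 * Int.fract x else 2 * Int.fract x - 1 := by
  have h2x : (2:ℝ)*x = 2*Int.fract x + ((2*⌊x⌋ : ℤ) : ℝ) := by
    push_cast; rw [Int.fract]; ring
  rw [h2x, Int.fract_add_intCast]
  have h0 := Int.fract_nonneg x
  have h1 := Int.fract_lt_one x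
  split_ifs with h
  · exact Int.fract_eq_self.mpr ⟨by linarith, by linarith⟩
  · have h2 : Int.fract (2*Int.fract x - 1) = 2*Int.fract x - 1 :=
      Int.fract_eq_self.mpr ⟨by linarith, by linarith⟩
    calc Int.fract (2*Int.fract x) = Int.fract ((2*Int.fract x - 1) + ((1:ℤ):ℝ)) := by norm_num
      _ = 2*Int.fract x - 1 := by rw [Int.fract_add_intCast]; exact h2

lemma uu_two_mul (x : ℝ) : uu (2*x) = FF (uu x) := by
  unfold uu FF
  rw [fract_two_mul]
  have h0 := Int.fract_nonneg x
  have h1 := Int.fract_lt_one x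
  set r := Int.fract x
  split_ifs with h
  · rw [abs_of_nonpos (by linarith : r - 1/2 ≤ 0),
      show (2*(2*(-(r-1/2))) - 1 : ℝ) = -(2*(2*r-1/2)) by ring, abs_neg, abs_mul]
    norm_num
  · rw [abs_of_nonneg (by linarith : (0:ℝ) ≤ r - 1/2),
      show (2*(2*(r-1/2)) - 1 : ℝ) = 2*(2*r-1-1/2) by ring, abs_mul]
    norm_num

lemma uu_pow (m : ℕ) (y : ℝ) : uu (2^m * y) = FF^[m] (uu y) := by
  induction m with
  | zero => simp
  | succ n ih =>
    rw [pow_succ, show (2:ℝ)^n * 2 * y = 2 * (2^n * y) by ring, uu_two_mul, ih,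
      Function.iterate_succ_apply']

lemma uu_eq_FF {t : ℝ} (h0 : 0 ≤ t) (h1 : t ≤ 1) : uu t = FF t := by
  unfold uu FF
  rcases eq_or_lt_of_le h1 with h | h
  · rw [h, Int.fract_one, show (0:ℝ) - 1/2 = -(1/2) by ring, abs_neg, abs_of_nonneg (by norm_num : (0:ℝ) ≤ 1/2)]; norm_num
  · rw [Int.fract_eq_self.mpr ⟨h0, h⟩, show (2*t-1:ℝ) = 2*(t-1/2) by ring, abs_mul]
    norm_num

lemma Cfun_eq (y : ℝ) : Cfun y = 2 * uu y - 1 := by unfold Cfun uu; ring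
lemma uu_add_int (y : ℝ) (n : ℤ) : uu (y + n) = uu y := by simp [uu, Int.fract_add_intCast]

lemma fract_sub_quarter (y : ℝ) :
    Int.fract (y - 1/4) = if Int.fract y < 1/4 then Int.fract y + 3/4 else Int.fract y - 1/4 := by
  have hy : y - 1/4 = (Int.fract y - 1/4) + ((⌊y⌋ : ℤ) : ℝ) := by rw [Int.fract]; ring
  rw [hy, Int.fract_add_intCast]
  have h0 := Int.fract_nonneg y
  have h1 := Int.fract_lt_one y
  split_ifs with h
  · have h2 : Int.fract (Int.fract y + 3/4) = Int.fract y + 3/4 :=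
      Int.fract_eq_self.mpr ⟨by linarith, by linarith⟩
    calc Int.fract (Int.fract y - 1/4)
        = Int.fract ((Int.fract y + 3/4) + (((-1) : ℤ):ℝ)) := by norm_num; ring_nf
      _ = Int.fract y + 3/4 := by rw [Int.fract_add_intCast]; exact h2
  · exact Int.fract_eq_self.mpr ⟨by linarith, by linarith⟩

lemma Sfun_eq (y : ℝ) : Sfun y = 2 * uu (y - 1/4) - 1 := by
  unfold Sfun uu
  rw [fract_sub_quarter]
  have h0 := Int.fract_nonneg y
  have h1 := Int.fract_lt_one y
  set r := Int.fract y
  split_ifs with h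
  · rw [abs_of_nonpos (by linarith : r - 1/4 ≤ 0),
      abs_of_nonneg (by linarith : (0:ℝ) ≤ 2 - 4*(-(r-1/4))),
      abs_of_nonneg (by linarith : (0:ℝ) ≤ r + 3/4 - 1/2)]
    ring
  · rw [abs_of_nonneg (by linarith : (0:ℝ) ≤ r - 1/4),
      show (2 - 4*(r-1/4) : ℝ) = -(4*(r - 1/4 - 1/2)) by ring, abs_neg, abs_mul]
    norm_num
    ring

lemma mem_transfer {d W L : ℕ} {M : ℝ} {f g : (Fin d → ℝ) → ℝ} {D : Set (Fin d → ℝ)}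
    (hg : MemUpsilonOn d W L M g D) (hfg : ∀ x ∈ D, f x = g x) :
    MemUpsilonOn d W L M f D := by
  obtain ⟨h1, A0, b0, A, b, AL, bL, hA0, hb0, hAb, hAL, hbL, hfun⟩ := hg
  exact ⟨h1, A0, b0, A, b, AL, bL, hA0, hb0, hAb, hAL, hbL,
    fun x hx => (hfg x hx).trans (hfun x hx)⟩

lemma mulVec2 (a b c e : ℝ) (v : Fin 2 → ℝ) :
    (!![a, b; c, e]).mulVec v = ![a * v 0 + b * v 1, c * v 0 + e * v 1] := by
  funext i
  fin_cases i <;>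
    simp [Matrix.mulVec, dotProduct, Fin.sum_univ_two]

lemma net_main (d m : ℕ) (β : Fin d → ℝ) (c : ℝ)
    (hβ : ∀ i, |β i| ≤ 2^m) (hc : |c| ≤ 2^m)
    (hlo : ∀ x ∈ Set.Icc (0 : Fin d → ℝ) 1, 0 ≤ (∑ i, β i * x i) + c)
    (hhi : ∀ x ∈ Set.Icc (0 : Fin d → ℝ) 1, (∑ i, β i * x i) + c ≤ 2^m) :
    MemUpsilonOn d 2 (m+2) 8
      (fun x => 2 * uu ((∑ i, β i * x i) + c) - 1) (Set.Icc 0 1) := by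
  have h2m : (0:ℝ) < 2^m := by positivity
  refine ⟨by omega, fun i j => if i = 0 then β j / 2^m else 0, ![c / 2^m, 0],
    fun _ => !![2, 2; -2, -2], fun _ => ![-1, 1], ![2, 2], -1, ?_, ?_, ?_, ?_, ?_, ?_⟩
  · intro i j
    dsimp only
    split_ifs
    · rw [abs_div, abs_of_pos h2m, div_le_iff₀ h2m]
      calc |β j| ≤ 2^m := hβ j
        _ ≤ 8 * 2^m := by nlinarith
    · simp
  · intro i
    fin_cases i
    · show |c / 2^m| ≤ 8
      rw [abs_div, abs_of_pos h2m, div_le_iff₀ h2m]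
      nlinarith
    · show |(0:ℝ)| ≤ 8; norm_num
  · intro l _
    constructor
    · intro i j; fin_cases i <;> fin_cases j <;> norm_num [Matrix.cons_val_zero, Matrix.cons_val_one]
    · intro i; fin_cases i <;> norm_num
  · intro i; fin_cases i <;> norm_num
  · norm_num
  · intro x hx
    set S : ℝ := (∑ i, β i * x i) + c with hS
    set t : ℝ := S / 2^m with ht
    have ht0 : 0 ≤ t := div_nonneg (hlo x hx) (le_of_lt h2m)
    have ht1 : t ≤ 1 := by
      rw [ht, div_le_one h2m]; exact hhi x hx
    have hSt : S = 2^m * t := by rw [ht]; field_simp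
    -- first layer
    set A0 : Matrix (Fin 2) (Fin d) ℝ := fun i j => if i = 0 then β j / 2^m else 0 with hA0
    have hv0 : (fun i => relu (A0.mulVec x i + ![c / 2^m, 0] i)) = ![t, 0] := by
      funext i
      fin_cases i
      · show relu (A0.mulVec x 0 + c / 2^m) = t
        have : A0.mulVec x 0 = (∑ i, β i * x i) / 2^m := by
          simp only [Matrix.mulVec, dotProduct, hA0]
          rw [Finset.sum_div]
          exact Finset.sum_congr rfl (fun j _ => by norm_num; ring)
        rw [this, show (∑ i, β i * x i) / 2^m + c / 2^m = t by rw [ht, hS]; ring]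
        exact max_eq_right ht0
      · show relu (A0.mulVec x 1 + 0) = 0
        have : A0.mulVec x 1 = 0 := by
          simp [Matrix.mulVec, dotProduct, hA0]
        rw [this]; simp [relu]
    set Amat : ℕ → Matrix (Fin 2) (Fin 2) ℝ := fun _ => !![2, 2; -2, -2] with hAmat
    set bvec : ℕ → Fin 2 → ℝ := fun _ => ![-1, 1] with hbvec
    have key : ∀ n, hiddenChain Amat bvec n ![t, 0] 0 + hiddenChain Amat bvec n ![t, 0] 1
        = FF^[n] t := by
      intro n
      induction n with
      | zero => simp [hiddenChain]
      | succ k ih =>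
        have emv : (Amat k).mulVec (hiddenChain Amat bvec k ![t, 0])
            = ![2 * hiddenChain Amat bvec k ![t, 0] 0 + 2 * hiddenChain Amat bvec k ![t, 0] 1,
                (-2) * hiddenChain Amat bvec k ![t, 0] 0 + (-2) * hiddenChain Amat bvec k ![t, 0] 1] :=
          mulVec2 2 2 (-2) (-2) _
        have e0 : (Amat k).mulVec (hiddenChain Amat bvec k ![t, 0]) 0
            = 2 * hiddenChain Amat bvec k ![t, 0] 0 + 2 * hiddenChain Amat bvec k ![t, 0] 1 := by
          rw [emv]; rfl
        have e1 : (Amat k).mulVec (hiddenChain Amat bvec k ![t, 0]) 1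
            = -2 * hiddenChain Amat bvec k ![t, 0] 0 - 2 * hiddenChain Amat bvec k ![t, 0] 1 := by
          rw [emv]; show (-2) * _ + (-2) * _ = _; ring
        show relu ((Amat k).mulVec (hiddenChain Amat bvec k ![t, 0]) 0 + bvec k 0)
            + relu ((Amat k).mulVec (hiddenChain Amat bvec k ![t, 0]) 1 + bvec k 1)
            = FF^[k+1] t
        rw [e0, e1, Function.iterate_succ_apply']
        have hb0 : bvec k 0 = -1 := rfl
        have hb1 : bvec k 1 = 1 := rfl
        rw [hb0, hb1]
        set a := hiddenChain Amat bvec k ![t, 0] 0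
        set b := hiddenChain Amat bvec k ![t, 0] 1
        have : -2 * a - 2 * b + 1 = -(2 * a + 2 * b + -1) := by ring
        rw [this, relu_abs]
        rw [show 2 * a + 2 * b + -1 = 2 * (a + b) - 1 by ring, ih]
        rfl
    show 2 * uu S - 1 = netFun d 2 (m+2) A0 ![c / 2^m, 0] Amat bvec ![2, 2] (-1) x
    rw [netFun]
    have hL : m + 2 - 1 = m + 1 := by omega
    rw [hL, hv0, Fin.sum_univ_two]
    have : (![2, 2] : Fin 2 → ℝ) 0 = 2 := rfl
    rw [this, show (![2, 2] : Fin 2 → ℝ) 1 = 2 from rfl]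
    have huu : uu S = FF^[m+1] t := by
      rw [hSt, uu_pow, uu_eq_FF ht0 ht1, ← Function.iterate_succ_apply]
    rw [huu, ← key (m+1)]
    ring

/-- For `d > 1` and `α ∈ ℤ^d \ {0}`, restricted to `[0,1]^d`, the function `x ↦ 𝒞(α·x)`
belongs to `Υ^{2, ⌈log₂‖α‖₁⌉+2}` and `x ↦ 𝒮(α·x)` belongs to `Υ^{2, ⌈log₂‖α‖₁⌉+3}`,
with all weights and biases bounded by 8. -/
theorem C_S_dot_mem_upsilon (d : ℕ) (hd : 1 < d) (α : Fin d → ℤ) (hα : α ≠ 0) :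
    MemUpsilonOn d 2 (Nat.clog 2 (∑ i, (α i).natAbs) + 2) 8
      (fun x => Cfun (∑ i, (α i : ℝ) * x i)) (Set.Icc 0 1) ∧
    MemUpsilonOn d 2 (Nat.clog 2 (∑ i, (α i).natAbs) + 3) 8
      (fun x => Sfun (∑ i, (α i : ℝ) * x i)) (Set.Icc 0 1) := by
  classical
  set n : ℕ := ∑ i, (α i).natAbs with hn
  set k : ℕ := Nat.clog 2 n with hk
  have hn1 : 0 < n := by
    by_contra h
    push_neg at h
    have h0 : ∑ i, (α i).natAbs = 0 := by omega
    apply hα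
    funext i
    exact Int.natAbs_eq_zero.mp (Finset.sum_eq_zero_iff.mp h0 i (Finset.mem_univ i))
  have hkpow : n ≤ 2 ^ k := Nat.le_pow_clog (by norm_num) n
  have hkR : (n : ℝ) ≤ 2 ^ k := by exact_mod_cast hkpow
  have h1k : (1 : ℝ) ≤ 2 ^ k := one_le_pow₀ (by norm_num)
  set s : ℤ := ∑ i, max (-α i) 0 with hsdef
  have hs0 : (0 : ℤ) ≤ s := Finset.sum_nonneg (fun i _ => le_max_right _ _)
  have hsn : s ≤ (n : ℤ) := by
    have hcast : (n : ℤ) = ∑ i, ((α i).natAbs : ℤ) := by rw [hn]; push_cast; rfl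
    rw [hcast, hsdef]
    refine Finset.sum_le_sum (fun i _ => ?_)
    rw [← Int.abs_eq_natAbs]
    exact max_le (neg_le_abs _) (abs_nonneg _)
  have hs0R : (0 : ℝ) ≤ (s : ℝ) := by exact_mod_cast hs0
  have hsnR : (s : ℝ) ≤ (n : ℝ) := by exact_mod_cast hsn
  have habsR : ∀ i, |(α i : ℝ)| ≤ (n : ℝ) := by
    intro i
    have h1 : (α i).natAbs ≤ n :=
      Finset.single_le_sum (f := fun i => (α i).natAbs) (fun _ _ => Nat.zero_le _)
        (Finset.mem_univ i)
    calc |(α i : ℝ)| = (((α i).natAbs : ℕ) : ℝ) := by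
          rw [Nat.cast_natAbs, Int.cast_abs]
      _ ≤ (n : ℝ) := by exact_mod_cast h1
  have hnsum : (n : ℝ) = ∑ i, |(α i : ℝ)| := by
    rw [hn]
    push_cast [Nat.cast_natAbs]
    rfl
  have hterm : ∀ (i : Fin d) (xi : ℝ), 0 ≤ xi → xi ≤ 1 →
      0 ≤ (α i : ℝ) * xi + ((max (-α i) 0 : ℤ) : ℝ) ∧
      (α i : ℝ) * xi + ((max (-α i) 0 : ℤ) : ℝ) ≤ |(α i : ℝ)| := by
    intro i xi h0 h1
    have hmax : ((max (-α i) 0 : ℤ) : ℝ) = max (-(α i : ℝ)) 0 := by push_cast; rfl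
    rcases le_total 0 ((α i : ℝ)) with h | h
    · rw [hmax, max_eq_right (by linarith), abs_of_nonneg h]
      constructor <;> nlinarith
    · rw [hmax, max_eq_left (by linarith), abs_of_nonpos h]
      constructor <;> nlinarith
  have hsum : ∀ x ∈ Set.Icc (0 : Fin d → ℝ) 1,
      0 ≤ (∑ i, (α i : ℝ) * x i) + (s : ℝ) ∧
      (∑ i, (α i : ℝ) * x i) + (s : ℝ) ≤ (n : ℝ) := by
    intro x hx
    obtain ⟨hx0, hx1⟩ := hx
    have hsR : (s : ℝ) = ∑ i, ((max (-α i) 0 : ℤ) : ℝ) := by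
      rw [hsdef]; push_cast; rfl
    have hsplit : (∑ i, (α i : ℝ) * x i) + (s : ℝ)
        = ∑ i, ((α i : ℝ) * x i + ((max (-α i) 0 : ℤ) : ℝ)) := by
      rw [hsR, Finset.sum_add_distrib]
    constructor
    · rw [hsplit]
      exact Finset.sum_nonneg (fun i _ => (hterm i (x i) (hx0 i) (hx1 i)).1)
    · rw [hsplit, hnsum]
      exact Finset.sum_le_sum (fun i _ => (hterm i (x i) (hx0 i) (hx1 i)).2)
  constructor
  · refine mem_transfer (net_main d k (fun i => (α i : ℝ)) (s : ℝ)
      (fun i => le_trans (habsR i) hkR)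
      (by rw [abs_of_nonneg hs0R]; linarith)
      (fun x hx => (hsum x hx).1)
      (fun x hx => le_trans (hsum x hx).2 hkR)) ?_
    intro x _
    show Cfun (∑ i, (α i : ℝ) * x i) = 2 * uu ((∑ i, (α i : ℝ) * x i) + (s : ℝ)) - 1
    rw [uu_add_int, Cfun_eq]
  · have h2k1 : (2 : ℝ) ^ (k + 1) = 2 * 2 ^ k := by ring
    refine mem_transfer (net_main d (k + 1) (fun i => (α i : ℝ)) ((s : ℝ) + 3/4)
      (fun i => by rw [h2k1]; have := habsR i; linarith)
      (by rw [abs_of_nonneg (by linarith), h2k1]; linarith)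
      (fun x hx => by have := (hsum x hx).1; linarith)
      (fun x hx => by have := (hsum x hx).2; rw [h2k1]; linarith)) ?_
    intro x _
    show Sfun (∑ i, (α i : ℝ) * x i) = 2 * uu ((∑ i, (α i : ℝ) * x i) + ((s : ℝ) + 3/4)) - 1
    rw [Sfun_eq, ← uu_add_int ((∑ i, (α i : ℝ) * x i) - 1/4) (s + 1)]
    congr 2
    push_cast
    ring
end

section
/- Let d ≥ 1, let k, l ≥ 0 be integers with k + l ≥ 1, let α₁,…,α_k, β₁,…,β_l ∈ ℤ^d \ {0}, and let a₁,…,a_k, b₁,…,b_l ∈ ℝ. Then the function f(x) = Σ_{i=1}^k a_i·𝒞(α_i·x) + Σ_{j=1}^l b_j·𝒮(β_j·x), restricted to x ∈ [0,1]^d, belongs to Υ^{W,L} with W = 2(k+l) and L = max over i = 1,…,k and j = 1,…,l of {⌈log₂ ‖α_i‖₁⌉+2, ⌈log₂ ‖β_j‖₁⌉+3}. Moreover, the network can be chosen so that all entries of the weight matrices and of the bias vectors are bounded in absolute value by max over i, j of {8|a_i|, 8|b_j|, 8}. -/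
noncomputable def Tmap (w : ℝ) : ℝ := 2 * |w| - 1

lemma relu_sub (w : ℝ) : relu w - relu (-w) = w := by
  unfold relu; rcases le_total 0 w with h | h
  · rw [max_eq_right h, max_eq_left (by linarith : -w ≤ 0)]; ring
  · rw [max_eq_left h, max_eq_right (by linarith : (0:ℝ) ≤ -w)]; ring

lemma relu_add (w : ℝ) : relu w + relu (-w) = |w| := by
  unfold relu; rcases le_total 0 w with h | h
  · rw [max_eq_right h, max_eq_left (by linarith : -w ≤ 0), abs_of_nonneg h]; ring
  · rw [max_eq_left h, max_eq_right (by linarith : (0:ℝ) ≤ -w), abs_of_nonpos h]; ring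

lemma cfun_int_add (t : ℝ) (z : ℤ) : Cfun (t + z) = Cfun t := by
  simp [Cfun, Int.fract_add_intCast]

lemma cfun_double (t : ℝ) : Cfun (2 * t) = Tmap (Cfun t) := by
  have h0 := Int.fract_nonneg t
  have h1 := Int.fract_lt_one t
  have ht : 2 * t = ((2 * ⌊t⌋ : ℤ) : ℝ) + 2 * Int.fract t := by
    have := Int.floor_add_fract t
    push_cast
    linarith
  rw [Cfun, Cfun, ht, Int.fract_intCast_add, Tmap]
  rcases lt_or_ge (Int.fract t) (1/2) with h | h
  · rw [Int.fract_eq_self.mpr ⟨by linarith, by linarith⟩]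
    rcases abs_cases (Int.fract t - 1/2) with ⟨e1, s1⟩ | ⟨e1, s1⟩ <;>
      rcases abs_cases (2 * Int.fract t - 1/2) with ⟨e2, s2⟩ | ⟨e2, s2⟩ <;>
      rcases abs_cases (4 * |Int.fract t - 1/2| - 1) with ⟨e3, s3⟩ | ⟨e3, s3⟩ <;>
      linarith
  · have hf : Int.fract (2 * Int.fract t) = 2 * Int.fract t - 1 := by
      rw [← Int.fract_sub_intCast (2 * Int.fract t) 1,
        Int.fract_eq_self.mpr ⟨by push_cast; linarith, by push_cast; linarith⟩]
      push_cast; ring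
    rw [hf]
    rcases abs_cases (Int.fract t - 1/2) with ⟨e1, s1⟩ | ⟨e1, s1⟩ <;>
      rcases abs_cases (2 * Int.fract t - 1 - 1/2) with ⟨e2, s2⟩ | ⟨e2, s2⟩ <;>
      rcases abs_cases (4 * |Int.fract t - 1/2| - 1) with ⟨e3, s3⟩ | ⟨e3, s3⟩ <;>
      linarith

lemma cfun_unit {y : ℝ} (h0 : 0 ≤ y) (h1 : y ≤ 1) : Cfun y = Tmap (2 * y - 1) := by
  rcases eq_or_lt_of_le h1 with rfl | h1
  · have habs : |(1:ℝ)/2| = 1/2 := abs_of_nonneg (by norm_num)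
    norm_num [Cfun, Tmap, habs]
  · rw [Cfun, Int.fract_eq_self.mpr ⟨h0, h1⟩, Tmap]
    rcases abs_cases (y - 1/2) with ⟨e1, s1⟩ | ⟨e1, s1⟩ <;>
      rcases abs_cases (2 * y - 1) with ⟨e2, s2⟩ | ⟨e2, s2⟩ <;> linarith

lemma sfun_eq (s : ℝ) : Sfun s = Cfun (s - 1/4) := by
  have h0 := Int.fract_nonneg s
  have h1 := Int.fract_lt_one s
  rw [Sfun, Cfun]
  rcases le_or_gt (1/4) (Int.fract s) with h | h
  · have hf : Int.fract (s - 1/4) = Int.fract s - 1/4 := by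
      rw [show s - 1/4 = ((⌊s⌋ : ℤ) : ℝ) + (Int.fract s - 1/4) by
          have := Int.floor_add_fract s; linarith,
        Int.fract_intCast_add, Int.fract_eq_self.mpr ⟨by linarith, by linarith⟩]
    rw [hf]
    rcases abs_cases (Int.fract s - 1/4) with ⟨e1, s1⟩ | ⟨e1, s1⟩ <;>
      rcases abs_cases (Int.fract s - 1/4 - 1/2) with ⟨e2, s2⟩ | ⟨e2, s2⟩ <;>
      rcases abs_cases (2 - 4 * |Int.fract s - 1/4|) with ⟨e3, s3⟩ | ⟨e3, s3⟩ <;>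
      linarith
  · have hf : Int.fract (s - 1/4) = Int.fract s + 3/4 := by
      rw [show s - 1/4 = ((⌊s⌋ - 1 : ℤ) : ℝ) + (Int.fract s + 3/4) by
          have := Int.floor_add_fract s; push_cast; linarith,
        Int.fract_intCast_add, Int.fract_eq_self.mpr ⟨by linarith, by linarith⟩]
    rw [hf]
    rcases abs_cases (Int.fract s - 1/4) with ⟨e1, s1⟩ | ⟨e1, s1⟩ <;>
      rcases abs_cases (Int.fract s + 3/4 - 1/2) with ⟨e2, s2⟩ | ⟨e2, s2⟩ <;>
      rcases abs_cases (2 - 4 * |Int.fract s - 1/4|) with ⟨e3, s3⟩ | ⟨e3, s3⟩ <;>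
      linarith

lemma cfun_scaled : ∀ (m : ℕ) (z : ℝ), 0 ≤ z → z ≤ 2 ^ m →
    Cfun z = Tmap^[m + 1] (2 * (z / 2 ^ m) - 1) := by
  intro m
  induction m with
  | zero => intro z h0 h1; simpa using cfun_unit h0 (by simpa using h1)
  | succ m ih =>
    intro z h0 h1
    have h2 : z / 2 ≤ 2 ^ m := by
      rw [div_le_iff₀ (by norm_num : (0:ℝ) < 2)]
      calc z ≤ 2 ^ (m+1) := h1
        _ = 2 ^ m * 2 := by ring
    have hz : Cfun (z / 2) = Tmap^[m + 1] (2 * (z / 2 / 2 ^ m) - 1) := ih (z / 2) (by linarith) h2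
    have harg : 2 * (z / 2 / 2 ^ m) - 1 = 2 * (z / 2 ^ (m + 1)) - 1 := by
      rw [pow_succ]; ring
    have h3 : Cfun z = Cfun (2 * (z / 2)) := by congr 1; ring
    rw [h3, cfun_double, hz, harg, ← Function.iterate_succ_apply' Tmap (m + 1)]

namespace UPf

def pairEquiv (N : ℕ) : Fin N × Fin 2 ≃ Fin (2 * N) where
  toFun p := ⟨2 * p.1 + p.2, by have := p.1.isLt; have := p.2.isLt; omega⟩
  invFun i := (⟨(i : ℕ) / 2, by have := i.isLt; omega⟩, ⟨(i : ℕ) % 2, by omega⟩)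
  left_inv p := by
    have := p.2.isLt
    ext
    · show (2 * (p.1 : ℕ) + p.2) / 2 = p.1; omega
    · show (2 * (p.1 : ℕ) + p.2) % 2 = p.2; omega
  right_inv i := by
    ext
    show 2 * ((i : ℕ) / 2) + (i : ℕ) % 2 = i; omega

variable {d k l : ℕ}

def pIdx (s : Fin k ⊕ Fin l) : Fin (2 * (k + l)) :=
  ⟨2 * (finSumFinEquiv s : ℕ), by have := (finSumFinEquiv s).isLt; omega⟩

def nIdx (s : Fin k ⊕ Fin l) : Fin (2 * (k + l)) :=
  ⟨2 * (finSumFinEquiv s : ℕ) + 1, by have := (finSumFinEquiv s).isLt; omega⟩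

def tIdx (i : Fin (2 * (k + l))) : Fin k ⊕ Fin l :=
  finSumFinEquiv.symm ⟨(i : ℕ) / 2, by have := i.isLt; omega⟩

noncomputable def sgn (i : Fin (2 * (k + l))) : ℝ := if (i : ℕ) % 2 = 0 then 1 else -1

lemma tIdx_pIdx (s : Fin k ⊕ Fin l) : tIdx (pIdx s) = s := by
  rw [tIdx, pIdx, show (⟨(2 * (finSumFinEquiv s : ℕ) : ℕ) / 2, by
      have := (finSumFinEquiv s).isLt; omega⟩ : Fin (k + l)) = finSumFinEquiv s from
    Fin.ext (by simp [Nat.mul_add_div]), Equiv.symm_apply_apply]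

lemma tIdx_nIdx (s : Fin k ⊕ Fin l) : tIdx (nIdx s) = s := by
  rw [tIdx, nIdx, show (⟨(2 * (finSumFinEquiv s : ℕ) + 1 : ℕ) / 2, by
      have := (finSumFinEquiv s).isLt; omega⟩ : Fin (k + l)) = finSumFinEquiv s from
    Fin.ext (by simp [Nat.mul_add_div]), Equiv.symm_apply_apply]

lemma sgn_pIdx (s : Fin k ⊕ Fin l) : sgn (pIdx s) = 1 := by
  have : (2 * (finSumFinEquiv s : ℕ)) % 2 = 0 := by omega
  simp [sgn, pIdx, this]

lemma sgn_nIdx (s : Fin k ⊕ Fin l) : sgn (nIdx s) = -1 := by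
  have : (2 * (finSumFinEquiv s : ℕ) + 1) % 2 = 1 := by omega
  simp [sgn, nIdx, this]

lemma abs_sgn (i : Fin (2 * (k + l))) : |sgn i| = 1 := by
  rw [sgn]; split <;> norm_num

lemma sum_pairs {M : Type*} [AddCommMonoid M] (g : Fin (2 * (k + l)) → M) :
    ∑ i, g i = ∑ s : Fin k ⊕ Fin l, (g (pIdx s) + g (nIdx s)) := by
  rw [← Equiv.sum_comp (pairEquiv (k + l)) g, Fintype.sum_prod_type,
    ← Equiv.sum_comp finSumFinEquiv
      (fun τ => ∑ j : Fin 2, g (pairEquiv (k + l) (τ, j)))]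
  refine Finset.sum_congr rfl fun s _ => ?_
  rw [Fin.sum_univ_two]
  have h1 : pairEquiv (k + l) (finSumFinEquiv s, 0) = pIdx s := by
    apply Fin.ext; simp [pairEquiv, pIdx]
  have h2 : pairEquiv (k + l) (finSumFinEquiv s, 1) = nIdx s := by
    apply Fin.ext; simp [pairEquiv, nIdx]
  rw [h1, h2]

lemma rowsum {W : ℕ} (p q : Fin W) (P Q : ℝ) (v : Fin W → ℝ) :
    (∑ j, ((if j = p then P else 0) + (if j = q then Q else 0)) * v j)
      = P * v p + Q * v q := by
  simp [add_mul, Finset.sum_add_distrib, ite_mul, Finset.sum_ite_eq']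

variable (α : Fin k → Fin d → ℤ) (β : Fin l → Fin d → ℤ) (a : Fin k → ℝ) (b : Fin l → ℝ)

def vecZ : Fin k ⊕ Fin l → Fin d → ℤ := Sum.elim α β
noncomputable def coef : Fin k ⊕ Fin l → ℝ := Sum.elim a b
def nrm (s : Fin k ⊕ Fin l) : ℕ := ∑ t, (vecZ α β s t).natAbs
def mdep (s : Fin k ⊕ Fin l) : ℕ :=
  Nat.clog 2 (nrm α β s) + Sum.elim (fun _ => 0) (fun _ => 1) s
noncomputable def csh (s : Fin k ⊕ Fin l) : ℝ :=
  -((∑ t, min (vecZ α β s t) 0 : ℤ) : ℝ) + Sum.elim (fun _ => (0:ℝ)) (fun _ => 3/4) s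
noncomputable def zf (s : Fin k ⊕ Fin l) (x : Fin d → ℝ) : ℝ :=
  (∑ t, (vecZ α β s t : ℝ) * x t) + csh α β s
noncomputable def u0 (s : Fin k ⊕ Fin l) (x : Fin d → ℝ) : ℝ :=
  2 * (zf α β s x / 2 ^ mdep α β s) - 1
noncomputable def wf (s : Fin k ⊕ Fin l) (n : ℕ) (x : Fin d → ℝ) : ℝ :=
  Tmap^[min n (mdep α β s + 1)] (u0 α β s x)
noncomputable def tgt (s : Fin k ⊕ Fin l) (x : Fin d → ℝ) : ℝ :=
  Sum.elim (fun i => Cfun (∑ t, (α i t : ℝ) * x t))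
    (fun j => Sfun (∑ t, (β j t : ℝ) * x t)) s

noncomputable def A0m : Matrix (Fin (2 * (k + l))) (Fin d) ℝ := fun i t =>
  sgn i * (2 / 2 ^ mdep α β (tIdx i)) * (vecZ α β (tIdx i) t : ℝ)
noncomputable def b0v (i : Fin (2 * (k + l))) : ℝ :=
  sgn i * ((2 / 2 ^ mdep α β (tIdx i)) * csh α β (tIdx i) - 1)
noncomputable def Am (n : ℕ) : Matrix (Fin (2 * (k + l))) (Fin (2 * (k + l))) ℝ :=
  fun i j =>
    (if j = pIdx (tIdx i) then sgn i * (if n ≤ mdep α β (tIdx i) then 2 else 1) else 0)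
    + (if j = nIdx (tIdx i) then sgn i * (if n ≤ mdep α β (tIdx i) then 2 else -1) else 0)
noncomputable def bv (n : ℕ) (i : Fin (2 * (k + l))) : ℝ :=
  if n ≤ mdep α β (tIdx i) then -sgn i else 0
noncomputable def ALv (i : Fin (2 * (k + l))) : ℝ := sgn i * coef a b (tIdx i)

lemma layer0 (x : Fin d → ℝ) (i : Fin (2 * (k + l))) :
    (A0m α β).mulVec x i + b0v α β i = sgn i * u0 α β (tIdx i) x := by
  simp only [Matrix.mulVec, dotProduct, A0m, b0v, u0, zf]
  have h : ∑ t, (sgn i * (2 / 2 ^ mdep α β (tIdx i)) * (vecZ α β (tIdx i) t : ℝ)) * x t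
      = (sgn i * (2 / 2 ^ mdep α β (tIdx i))) * ∑ t, (vecZ α β (tIdx i) t : ℝ) * x t := by
    rw [Finset.mul_sum]; exact Finset.sum_congr rfl fun t _ => by ring
  rw [h]
  ring

lemma chain_eval (x : Fin d → ℝ) : ∀ (n : ℕ) (i : Fin (2 * (k + l))),
    hiddenChain (Am α β) (bv α β) n
      (fun i => relu ((A0m α β).mulVec x i + b0v α β i)) i
      = relu (sgn i * wf α β (tIdx i) n x) := by
  intro n
  induction n with
  | zero =>
    intro i
    show relu ((A0m α β).mulVec x i + b0v α β i) = _
    rw [layer0, wf, Nat.zero_min, Function.iterate_zero_apply]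
  | succ n ih =>
    intro i
    show relu ((Am α β n).mulVec
      (hiddenChain (Am α β) (bv α β) n
        (fun i => relu ((A0m α β).mulVec x i + b0v α β i))) i + bv α β n i) = _
    have hmv : (Am α β n).mulVec
        (hiddenChain (Am α β) (bv α β) n
          (fun i => relu ((A0m α β).mulVec x i + b0v α β i))) i
        = (sgn i * (if n ≤ mdep α β (tIdx i) then 2 else 1))
            * relu (wf α β (tIdx i) n x)
          + (sgn i * (if n ≤ mdep α β (tIdx i) then 2 else -1))
            * relu (-(wf α β (tIdx i) n x)) := by
      show (∑ j, Am α β n i j * _) = _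
      simp only [Am]
      rw [rowsum, ih (pIdx (tIdx i)), ih (nIdx (tIdx i)), tIdx_pIdx, tIdx_nIdx,
        sgn_pIdx, sgn_nIdx, one_mul, neg_one_mul]
    rw [hmv, bv]
    by_cases hs : n ≤ mdep α β (tIdx i)
    · rw [if_pos hs, if_pos hs, if_pos hs]
      have hw : wf α β (tIdx i) (n + 1) x = Tmap (wf α β (tIdx i) n x) := by
        rw [wf, wf, show min (n + 1) (mdep α β (tIdx i) + 1)
            = min n (mdep α β (tIdx i) + 1) + 1 by omega,
          Function.iterate_succ_apply']
      rw [hw, Tmap]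
      congr 1
      linear_combination (2 * sgn i) * relu_add (wf α β (tIdx i) n x)
    · rw [if_neg hs, if_neg hs, if_neg hs]
      have hw : wf α β (tIdx i) (n + 1) x = wf α β (tIdx i) n x := by
        rw [wf, wf, show min (n + 1) (mdep α β (tIdx i) + 1)
            = min n (mdep α β (tIdx i) + 1) by omega]
      rw [hw]
      congr 1
      linear_combination (sgn i) * relu_sub (wf α β (tIdx i) n x)


lemma natAbs_cast (v : ℤ) : ((v.natAbs : ℕ) : ℝ) = |(v : ℝ)| := by
  rw [Nat.cast_natAbs, Int.cast_abs]

lemma termwise (v : ℝ) {x : ℝ} (h0 : 0 ≤ x) (h1 : x ≤ 1) :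
    min v 0 ≤ v * x ∧ v * x ≤ |v| + min v 0 := by
  rcases le_total v 0 with h | h
  · rw [min_eq_left h, abs_of_nonpos h]; constructor <;> nlinarith
  · rw [min_eq_right h, abs_of_nonneg h]; constructor <;> nlinarith

lemma hnrm_cast (s : Fin k ⊕ Fin l) :
    ((nrm α β s : ℕ) : ℝ) = ∑ t, |((vecZ α β s t : ℤ) : ℝ)| := by
  rw [nrm, Nat.cast_sum]
  exact Finset.sum_congr rfl fun t _ => natAbs_cast _

lemma hmin_cast (s : Fin k ⊕ Fin l) :
    ((∑ t, min (vecZ α β s t) 0 : ℤ) : ℝ) = ∑ t, min ((vecZ α β s t : ℤ) : ℝ) 0 := by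
  push_cast
  rfl

lemma qs_bounds (s : Fin k ⊕ Fin l) :
    0 ≤ Sum.elim (fun _ => (0:ℝ)) (fun _ => 3/4) s
      ∧ Sum.elim (fun _ => (0:ℝ)) (fun _ => 3/4) s ≤ 3/4 := by
  cases s <;> norm_num

lemma nrm_le_pow (s : Fin k ⊕ Fin l) : ((nrm α β s : ℕ) : ℝ) ≤ 2 ^ mdep α β s := by
  have h := Nat.le_pow_clog (by norm_num : 1 < 2) (nrm α β s)
  have h' : ((nrm α β s : ℕ) : ℝ) ≤ 2 ^ Nat.clog 2 (nrm α β s) := by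
    exact_mod_cast h
  have hmono : (2:ℝ) ^ Nat.clog 2 (nrm α β s) ≤ 2 ^ mdep α β s := by
    apply pow_le_pow_right₀ (by norm_num)
    rw [mdep]; omega
  linarith

lemma nrmq_le (s : Fin k ⊕ Fin l) (hn : 1 ≤ nrm α β s) :
    ((nrm α β s : ℕ) : ℝ) + Sum.elim (fun _ => (0:ℝ)) (fun _ => 3/4) s
      ≤ 2 ^ mdep α β s := by
  have h := Nat.le_pow_clog (by norm_num : 1 < 2) (nrm α β s)
  have h' : ((nrm α β s : ℕ) : ℝ) ≤ 2 ^ Nat.clog 2 (nrm α β s) := by exact_mod_cast h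
  have h1 : (1:ℝ) ≤ ((nrm α β s : ℕ) : ℝ) := by exact_mod_cast hn
  cases s with
  | inl i =>
    simpa [mdep] using h'
  | inr j =>
    have : mdep α β (Sum.inr j) = Nat.clog 2 (nrm α β (Sum.inr j)) + 1 := by
      simp [mdep]
    rw [this, pow_succ]
    simp only [Sum.elim_inr]
    have h2 : ((nrm α β (Sum.inr j) : ℕ) : ℝ) ≤ 2 ^ Nat.clog 2 (nrm α β (Sum.inr j)) := h'
    have h3 : (1:ℝ) ≤ ((nrm α β (Sum.inr j) : ℕ) : ℝ) := h1
    linarith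

lemma zf_bounds (s : Fin k ⊕ Fin l) (x : Fin d → ℝ)
    (hx : x ∈ Set.Icc (0 : Fin d → ℝ) 1) (hn : 1 ≤ nrm α β s) :
    0 ≤ zf α β s x ∧ zf α β s x ≤ 2 ^ mdep α β s := by
  have hx0 : ∀ t, 0 ≤ x t := fun t => hx.1 t
  have hx1 : ∀ t, x t ≤ 1 := fun t => hx.2 t
  have key1 : ∑ t, min ((vecZ α β s t : ℤ) : ℝ) 0 ≤ ∑ t, ((vecZ α β s t : ℤ) : ℝ) * x t :=
    Finset.sum_le_sum fun t _ => (termwise _ (hx0 t) (hx1 t)).1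
  have key2 : ∑ t, ((vecZ α β s t : ℤ) : ℝ) * x t
      ≤ ∑ t, (|((vecZ α β s t : ℤ) : ℝ)| + min ((vecZ α β s t : ℤ) : ℝ) 0) :=
    Finset.sum_le_sum fun t _ => (termwise _ (hx0 t) (hx1 t)).2
  rw [Finset.sum_add_distrib, ← hnrm_cast] at key2
  obtain ⟨hq0, _⟩ := qs_bounds (k := k) (l := l) s
  have hnq := nrmq_le α β s hn
  rw [zf, csh, hmin_cast]
  constructor
  · linarith
  · linarith

lemma cfun_zf (s : Fin k ⊕ Fin l) (x : Fin d → ℝ) :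
    Cfun (zf α β s x) = tgt α β s x := by
  cases s with
  | inl i =>
    have h : zf α β (Sum.inl i) x
        = (∑ t, (α i t : ℝ) * x t) + ((-(∑ t, min (α i t) 0) : ℤ) : ℝ) := by
      simp only [zf, csh, vecZ, Sum.elim_inl]
      push_cast
      ring
    rw [h, cfun_int_add]
    simp [tgt]
  | inr j =>
    have h : zf α β (Sum.inr j) x
        = ((∑ t, (β j t : ℝ) * x t) - 1/4) + ((1 - ∑ t, min (β j t) 0 : ℤ) : ℝ) := by
      simp only [zf, csh, vecZ, Sum.elim_inr]
      push_cast
      ring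
    rw [h, cfun_int_add, ← sfun_eq]
    simp [tgt]

lemma wf_final (s : Fin k ⊕ Fin l) (x : Fin d → ℝ)
    (hx : x ∈ Set.Icc (0 : Fin d → ℝ) 1) (hn : 1 ≤ nrm α β s)
    (n : ℕ) (hLn : mdep α β s + 1 ≤ n) :
    wf α β s n x = tgt α β s x := by
  obtain ⟨hz0, hz1⟩ := zf_bounds α β s x hx hn
  rw [wf, min_eq_right hLn, u0, ← cfun_scaled (mdep α β s) (zf α β s x) hz0 hz1,
    cfun_zf]

lemma csh_le (s : Fin k ⊕ Fin l) : |csh α β s| ≤ ((nrm α β s : ℕ) : ℝ) + 1 := by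
  rw [csh]
  refine le_trans (abs_add_le _ _) ?_
  obtain ⟨hq0, hq1⟩ := qs_bounds (k := k) (l := l) s
  have h1 : |(-((∑ t, min (vecZ α β s t) 0 : ℤ) : ℝ))| ≤ ((nrm α β s : ℕ) : ℝ) := by
    rw [abs_neg, hmin_cast, hnrm_cast]
    refine le_trans (Finset.abs_sum_le_sum_abs _ _) (Finset.sum_le_sum fun t _ => ?_)
    rcases le_total ((vecZ α β s t : ℤ) : ℝ) 0 with h | h
    · rw [min_eq_left h]
    · rw [min_eq_right h]; simp
  have h2 : |Sum.elim (fun _ => (0:ℝ)) (fun _ => 3/4) s| ≤ 1 := by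
    rw [abs_of_nonneg hq0]; linarith
  linarith

lemma vec_le (s : Fin k ⊕ Fin l) (t : Fin d) :
    |((vecZ α β s t : ℤ) : ℝ)| ≤ ((nrm α β s : ℕ) : ℝ) := by
  rw [← natAbs_cast]
  rw [nrm]
  have : (vecZ α β s t).natAbs ≤ ∑ t', (vecZ α β s t').natAbs :=
    Finset.single_le_sum (f := fun t' => (vecZ α β s t').natAbs)
      (fun _ _ => Nat.zero_le _) (Finset.mem_univ t)
  exact_mod_cast this

end UPf

/-- Linear combinations `f(x) = Σᵢ aᵢ 𝒞(αᵢ·x) + Σⱼ bⱼ 𝒮(βⱼ·x)` restricted to `[0,1]^d`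
belong to `Υ^{W,L}` with `W = 2(k+l)` and
`L = maxᵢⱼ {⌈log₂‖αᵢ‖₁⌉+2, ⌈log₂‖βⱼ‖₁⌉+3}`, with all weights and biases bounded by
`maxᵢⱼ {8|aᵢ|, 8|bⱼ|, 8}`. -/
theorem lin_comb_mem_upsilon (d k l : ℕ) (hd : 1 ≤ d) (hkl : 1 ≤ k + l)
    (α : Fin k → Fin d → ℤ) (β : Fin l → Fin d → ℤ)
    (hα : ∀ i, α i ≠ 0) (hβ : ∀ j, β j ≠ 0)
    (a : Fin k → ℝ) (b : Fin l → ℝ) :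
    MemUpsilonOn d (2 * (k + l))
      (max ((Finset.univ : Finset (Fin k)).sup
              fun i => Nat.clog 2 (∑ t, (α i t).natAbs) + 2)
           ((Finset.univ : Finset (Fin l)).sup
              fun j => Nat.clog 2 (∑ t, (β j t).natAbs) + 3))
      (max 8 (max (⨆ i : Fin k, 8 * |a i|) (⨆ j : Fin l, 8 * |b j|)))
      (fun x => (∑ i, a i * Cfun (∑ t, (α i t : ℝ) * x t))
          + ∑ j, b j * Sfun (∑ t, (β j t : ℝ) * x t))
      (Set.Icc 0 1) := by
  classical
  set L : ℕ := max ((Finset.univ : Finset (Fin k)).sup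
      fun i => Nat.clog 2 (∑ t, (α i t).natAbs) + 2)
    ((Finset.univ : Finset (Fin l)).sup
      fun j => Nat.clog 2 (∑ t, (β j t).natAbs) + 3) with hLdef
  set M : ℝ := max 8 (max (⨆ i : Fin k, 8 * |a i|) (⨆ j : Fin l, 8 * |b j|)) with hMdef
  have h8M : (8:ℝ) ≤ M := le_max_left _ _
  have hL1 : 1 ≤ L := by
    rcases Nat.eq_zero_or_pos k with hk | hk
    · have hl : 0 < l := by omega
      refine le_trans ?_ (le_max_right _ _)
      refine le_trans ?_ (Finset.le_sup (Finset.mem_univ (⟨0, hl⟩ : Fin l)))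
      omega
    · refine le_trans ?_ (le_max_left _ _)
      refine le_trans ?_ (Finset.le_sup (Finset.mem_univ (⟨0, hk⟩ : Fin k)))
      omega
  have hmd : ∀ s : Fin k ⊕ Fin l, UPf.mdep α β s + 2 ≤ L := by
    intro s
    cases s with
    | inl i =>
      have e : UPf.mdep α β (Sum.inl i) = Nat.clog 2 (∑ t, (α i t).natAbs) := by
        simp [UPf.mdep, UPf.nrm, UPf.vecZ]
      calc UPf.mdep α β (Sum.inl i) + 2 = Nat.clog 2 (∑ t, (α i t).natAbs) + 2 := by rw [e]
        _ ≤ (Finset.univ : Finset (Fin k)).sup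
              (fun i => Nat.clog 2 (∑ t, (α i t).natAbs) + 2) :=
            Finset.le_sup (f := fun i => Nat.clog 2 (∑ t, (α i t).natAbs) + 2)
              (Finset.mem_univ i)
        _ ≤ L := le_max_left _ _
    | inr j =>
      have e : UPf.mdep α β (Sum.inr j) = Nat.clog 2 (∑ t, (β j t).natAbs) + 1 := by
        simp [UPf.mdep, UPf.nrm, UPf.vecZ]
      calc UPf.mdep α β (Sum.inr j) + 2 = Nat.clog 2 (∑ t, (β j t).natAbs) + 3 := by
            rw [e]
        _ ≤ (Finset.univ : Finset (Fin l)).sup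
              (fun j => Nat.clog 2 (∑ t, (β j t).natAbs) + 3) :=
            Finset.le_sup (f := fun j => Nat.clog 2 (∑ t, (β j t).natAbs) + 3)
              (Finset.mem_univ j)
        _ ≤ L := le_max_right _ _
  have hnrm1 : ∀ s : Fin k ⊕ Fin l, 1 ≤ UPf.nrm α β s := by
    intro s
    rw [Nat.one_le_iff_ne_zero]
    intro h
    rw [UPf.nrm] at h
    cases s with
    | inl i =>
      apply hα i
      funext t
      have := Finset.sum_eq_zero_iff.mp h t (Finset.mem_univ t)
      simpa [UPf.vecZ, Int.natAbs_eq_zero] using this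
    | inr j =>
      apply hβ j
      funext t
      have := Finset.sum_eq_zero_iff.mp h t (Finset.mem_univ t)
      simpa [UPf.vecZ, Int.natAbs_eq_zero] using this
  refine ⟨hL1, UPf.A0m α β, UPf.b0v α β, UPf.Am α β, UPf.bv α β, UPf.ALv a b, 0,
    ?_, ?_, ?_, ?_, ?_, ?_⟩
  · -- A0 bound
    intro i t
    have hP : (0:ℝ) < 2 ^ UPf.mdep α β (UPf.tIdx i) := by positivity
    rw [UPf.A0m, abs_mul, abs_mul, UPf.abs_sgn, one_mul,
      abs_of_pos (by positivity : (0:ℝ) < 2 / 2 ^ UPf.mdep α β (UPf.tIdx i))]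
    calc (2 / 2 ^ UPf.mdep α β (UPf.tIdx i)) * |((UPf.vecZ α β (UPf.tIdx i) t : ℤ) : ℝ)|
        ≤ (2 / 2 ^ UPf.mdep α β (UPf.tIdx i)) * 2 ^ UPf.mdep α β (UPf.tIdx i) :=
          mul_le_mul_of_nonneg_left
            (le_trans (UPf.vec_le α β _ t) (UPf.nrm_le_pow α β _)) (by positivity)
      _ = 2 := by field_simp
      _ ≤ M := by linarith
  · -- b0 bound
    intro i
    have hP : (0:ℝ) < 2 ^ UPf.mdep α β (UPf.tIdx i) := by positivity
    have hP1 : (1:ℝ) ≤ 2 ^ UPf.mdep α β (UPf.tIdx i) := one_le_pow₀ (by norm_num)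
    have hc : |UPf.csh α β (UPf.tIdx i)|
        ≤ 2 ^ UPf.mdep α β (UPf.tIdx i) + 2 ^ UPf.mdep α β (UPf.tIdx i) := by
      have h1 := UPf.csh_le α β (UPf.tIdx i)
      have h2 := UPf.nrm_le_pow α β (UPf.tIdx i)
      linarith
    have htri : |(2 / 2 ^ UPf.mdep α β (UPf.tIdx i)) * UPf.csh α β (UPf.tIdx i) - 1|
        ≤ |(2 / 2 ^ UPf.mdep α β (UPf.tIdx i)) * UPf.csh α β (UPf.tIdx i)| + 1 := by
      calc |(2 / 2 ^ UPf.mdep α β (UPf.tIdx i)) * UPf.csh α β (UPf.tIdx i) - 1|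
          = |(2 / 2 ^ UPf.mdep α β (UPf.tIdx i)) * UPf.csh α β (UPf.tIdx i) + (-1)| := by
            ring_nf
        _ ≤ |(2 / 2 ^ UPf.mdep α β (UPf.tIdx i)) * UPf.csh α β (UPf.tIdx i)| + |(-1:ℝ)| :=
            abs_add_le _ _
        _ = |(2 / 2 ^ UPf.mdep α β (UPf.tIdx i)) * UPf.csh α β (UPf.tIdx i)| + 1 := by
            norm_num
    rw [UPf.b0v, abs_mul, UPf.abs_sgn, one_mul]
    have hmul : |(2 / 2 ^ UPf.mdep α β (UPf.tIdx i)) * UPf.csh α β (UPf.tIdx i)|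
        ≤ 4 := by
      rw [abs_mul, abs_of_pos (by positivity : (0:ℝ) < 2 / 2 ^ UPf.mdep α β (UPf.tIdx i))]
      calc (2 / 2 ^ UPf.mdep α β (UPf.tIdx i)) * |UPf.csh α β (UPf.tIdx i)|
          ≤ (2 / 2 ^ UPf.mdep α β (UPf.tIdx i))
              * (2 ^ UPf.mdep α β (UPf.tIdx i) + 2 ^ UPf.mdep α β (UPf.tIdx i)) :=
            mul_le_mul_of_nonneg_left hc (by positivity)
        _ = 4 := by field_simp; ring
    linarith
  · -- hidden bounds
    intro n _
    constructor
    · intro i j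
      rw [UPf.Am]
      refine le_trans (abs_add_le _ _) ?_
      have e1 : |(if j = UPf.pIdx (UPf.tIdx i) then
          UPf.sgn i * (if n ≤ UPf.mdep α β (UPf.tIdx i) then 2 else 1) else 0)| ≤ 2 := by
        split_ifs <;> norm_num [abs_mul, UPf.abs_sgn]
      have e2 : |(if j = UPf.nIdx (UPf.tIdx i) then
          UPf.sgn i * (if n ≤ UPf.mdep α β (UPf.tIdx i) then 2 else -1) else 0)| ≤ 2 := by
        split_ifs <;> norm_num [abs_mul, UPf.abs_sgn]
      linarith
    · intro i
      rw [UPf.bv]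
      split_ifs
      · rw [abs_neg, UPf.abs_sgn]; linarith
      · simp; linarith
  · -- AL bound
    intro i
    rw [UPf.ALv, abs_mul, UPf.abs_sgn, one_mul]
    rcases hτ : UPf.tIdx i with i0 | j0
    · have h1 : |UPf.coef a b (Sum.inl i0)| = |a i0| := by simp [UPf.coef]
      rw [h1]
      have h2 : 8 * |a i0| ≤ ⨆ i, 8 * |a i| :=
        le_ciSup (f := fun i => 8 * |a i|)
          (Set.Finite.bddAbove (Set.finite_range _)) i0
      have h3 : (⨆ i, 8 * |a i|) ≤ M := by
        rw [hMdef]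
        exact le_trans (le_max_left _ _) (le_max_right _ _)
      have := abs_nonneg (a i0)
      linarith
    · have h1 : |UPf.coef a b (Sum.inr j0)| = |b j0| := by simp [UPf.coef]
      rw [h1]
      have h2 : 8 * |b j0| ≤ ⨆ j, 8 * |b j| :=
        le_ciSup (f := fun j => 8 * |b j|)
          (Set.Finite.bddAbove (Set.finite_range _)) j0
      have h3 : (⨆ j, 8 * |b j|) ≤ M := by
        rw [hMdef]
        exact le_trans (le_max_right _ _) (le_max_right _ _)
      have := abs_nonneg (b j0)
      linarith
  · -- bL bound
    simp only [abs_zero]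
    linarith
  · -- evaluation
    intro x hx
    show (∑ i, a i * Cfun (∑ t, (α i t : ℝ) * x t))
        + ∑ j, b j * Sfun (∑ t, (β j t : ℝ) * x t) = _
    rw [netFun]
    have hsum : (∑ i, UPf.ALv a b i * hiddenChain (UPf.Am α β) (UPf.bv α β) (L - 1)
          (fun i => relu ((UPf.A0m α β).mulVec x i + UPf.b0v α β i)) i)
        = ∑ s : Fin k ⊕ Fin l, UPf.coef a b s * UPf.tgt α β s x := by
      calc (∑ i, UPf.ALv a b i * hiddenChain (UPf.Am α β) (UPf.bv α β) (L - 1)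
            (fun i => relu ((UPf.A0m α β).mulVec x i + UPf.b0v α β i)) i)
          = ∑ i, UPf.ALv a b i * relu (UPf.sgn i * UPf.wf α β (UPf.tIdx i) (L - 1) x) :=
            Finset.sum_congr rfl (fun i _ => by rw [UPf.chain_eval α β x])
        _ = ∑ s : Fin k ⊕ Fin l,
              (UPf.ALv a b (UPf.pIdx s)
                  * relu (UPf.sgn (UPf.pIdx s) * UPf.wf α β (UPf.tIdx (UPf.pIdx s)) (L - 1) x)
                + UPf.ALv a b (UPf.nIdx s)
                  * relu (UPf.sgn (UPf.nIdx s) * UPf.wf α β (UPf.tIdx (UPf.nIdx s)) (L - 1) x)) :=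
            UPf.sum_pairs _
        _ = ∑ s : Fin k ⊕ Fin l, UPf.coef a b s * UPf.tgt α β s x := by
            refine Finset.sum_congr rfl fun s _ => ?_
            simp only [UPf.ALv, UPf.tIdx_pIdx, UPf.tIdx_nIdx, UPf.sgn_pIdx, UPf.sgn_nIdx,
              one_mul, neg_one_mul]
            rw [UPf.wf_final α β s x hx (hnrm1 s) (L - 1) (by have := hmd s; omega)]
            linear_combination (UPf.coef a b s) * relu_sub (UPf.tgt α β s x)
    rw [hsum, add_zero, Fintype.sum_sum_type]
    simp only [UPf.coef, UPf.tgt, Sum.elim_inl, Sum.elim_inr]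
end
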